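/- arXiv:math/0404295 — 7 statements merged into one kernel-verified Lean document; each statement's English description precedes it below -/
import Mathlib

section
/- Let (X,ρ) be a complete metric space and T_n : X → X maps with ρ(T_n x, T_n y) ≤ λ_n ρ(x,y), λ_n ∈ (0,1). Assume ∑_{n=1}^∞ ∏_{j=1}^n λ_j < ∞ and sup_n ρ(T_n x, x) < ∞ for some x ∈ X. Then for every y ∈ X the sequence S_n y := T_1∘T_2∘⋯∘T_n y converges to a limit x₀ ∈ X which is independent of y. -/
/-!
The composition `S n` is Lipschitz with constant `Λ n = ∏_{j ≤ n} λ_j`. Since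
`S (n + 1) x = S n (T (n + 1) x)`, consecutive terms of `S n x` are at distance at most
`Λ n * M`, a summable bound, so `S n x` is Cauchy and converges to some `x₀`. For any other
`y`, `dist (S n y) (S n x) ≤ Λ n * dist y x → 0`, so `S n y` has the same limit.
-/

open Filter Topology Finset

section

variable {X Y : Type*} [PseudoMetricSpace X] [PseudoMetricSpace Y]

theorem dist_comp_le_prod_mul_dist {T S : ℕ → X → X} {lam : ℕ → ℝ}
    (hlam : ∀ n, 0 ≤ lam n) (hcontr : ∀ n a b, dist (T n a) (T n b) ≤ lam n * dist a b)
    (hS0 : ∀ y, S 0 y = T 0 y) (hSsucc : ∀ n y, S (n + 1) y = S n (T (n + 1) y)) (n : ℕ)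
    (a b : X) : dist (S n a) (S n b) ≤ (∏ j ∈ range (n + 1), lam j) * dist a b := by
  induction n generalizing a b with
  | zero => simpa [hS0] using hcontr 0 a b
  | succ n ih =>
    rw [hSsucc, hSsucc, prod_range_succ, mul_assoc]
    exact (ih _ _).trans <| mul_le_mul_of_nonneg_left (hcontr (n + 1) a b) <|
      prod_nonneg fun j _ => hlam j

theorem cauchySeq_apply_of_dist_le_mul {T S : ℕ → X → X} {L : ℕ → ℝ} {x : X} {M : ℝ}
    (hL : ∀ n, 0 ≤ L n) (hLsum : Summable L) (hS : ∀ n a b, dist (S n a) (S n b) ≤ L n * dist a b)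
    (hSsucc : ∀ n y, S (n + 1) y = S n (T (n + 1) y)) (hM : ∀ n, dist (T n x) x ≤ M) :
    CauchySeq fun n => S n x := by
  refine cauchySeq_of_dist_le_of_summable (fun n => L n * M) (fun n => ?_) (hLsum.mul_right M)
  rw [dist_comm, hSsucc]
  exact (hS n _ _).trans <| mul_le_mul_of_nonneg_left (hM (n + 1)) (hL n)

theorem tendsto_apply_of_dist_le_mul {f : ℕ → X → Y} {L : ℕ → ℝ} {x : X} {x₀ : Y}
    (hf : ∀ n a b, dist (f n a) (f n b) ≤ L n * dist a b) (hL : Tendsto L atTop (𝓝 0))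
    (hx : Tendsto (fun n => f n x) atTop (𝓝 x₀)) (y : X) :
    Tendsto (fun n => f n y) atTop (𝓝 x₀) := by
  rw [tendsto_iff_dist_tendsto_zero] at hx ⊢
  have hbound : Tendsto (fun n => L n * dist y x + dist (f n x) x₀) atTop (𝓝 0) := by
    simpa using (hL.mul_const (dist y x)).add hx
  exact squeeze_zero (fun n => dist_nonneg)
    (fun n => (dist_triangle _ (f n x) _).trans (add_le_add_left (hf n y x) _)) hbound

end

/-- Generalized contraction theorem: if `T n` are contractions with ratios
`lam n ∈ (0,1)`, `∑_n ∏_{j≤n} lam j < ∞` and `sup_n dist (T n x) x < ∞` for some `x`,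
then the compositions `S n y = T 0 ∘ ⋯ ∘ T n y` converge to a limit independent of `y`. -/
theorem stmt1 {X : Type*} [MetricSpace X] [CompleteSpace X]
    (T : ℕ → X → X) (lam : ℕ → ℝ)
    (hlam : ∀ n, lam n ∈ Set.Ioo (0 : ℝ) 1)
    (hcontr : ∀ n a b, dist (T n a) (T n b) ≤ lam n * dist a b)
    (hsum : Summable (fun n => ∏ j ∈ Finset.range (n + 1), lam j))
    (x : X) (hx : ∃ M : ℝ, ∀ n, dist (T n x) x ≤ M)
    (S : ℕ → X → X)
    (hS0 : ∀ y, S 0 y = T 0 y)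
    (hSsucc : ∀ n y, S (n + 1) y = S n (T (n + 1) y)) :
    ∃ x₀ : X, ∀ y : X, Tendsto (fun n => S n y) atTop (nhds x₀) := by
  obtain ⟨M, hM⟩ := hx
  have hlam_nonneg : ∀ n, 0 ≤ lam n := fun n => (hlam n).1.le
  have hLip := dist_comp_le_prod_mul_dist hlam_nonneg hcontr hS0 hSsucc
  have hcauchy : CauchySeq fun n => S n x :=
    cauchySeq_apply_of_dist_le_mul (fun n => prod_nonneg fun j _ => hlam_nonneg j) hsum hLip
      hSsucc hM
  obtain ⟨x₀, hx₀⟩ := cauchySeq_tendsto_of_complete hcauchy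
  exact ⟨x₀, tendsto_apply_of_dist_le_mul hLip hsum.tendsto_atTop_zero hx₀⟩
end

section
/- Under the hypotheses of the generalized contraction theorem (∑ ∏_{j≤n} λ_j < ∞ and M := sup_n ρ(T_n x, x) < ∞), the sequence S_n x = T_1∘⋯∘T_n x is Cauchy: for all n, p one has ρ(S_{n+p} x, S_n x) ≤ M ∑_{k=n}^∞ ∏_{j=1}^k λ_j. -/
/-- Cauchy estimate for the compositions `S n = T 0 ∘ ⋯ ∘ T n`:
`dist (S (n+p) x) (S n x) ≤ M * ∑_{k=n}^∞ ∏_{j=1}^{k} lam j`. -/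
theorem stmt3 {X : Type*} [MetricSpace X] [CompleteSpace X]
    (T : ℕ → X → X) (lam : ℕ → ℝ)
    (hlam : ∀ n, lam n ∈ Set.Ioo (0 : ℝ) 1)
    (hcontr : ∀ n a b, dist (T n a) (T n b) ≤ lam n * dist a b)
    (hsum : Summable (fun n => ∏ j ∈ Finset.range (n + 1), lam j))
    (x : X) (M : ℝ) (hM : ∀ n, dist (T n x) x ≤ M)
    (S : ℕ → X → X)
    (hS0 : ∀ y, S 0 y = T 0 y)
    (hSsucc : ∀ n y, S (n + 1) y = S n (T (n + 1) y)) :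
    ∀ n p : ℕ,
      dist (S (n + p) x) (S n x) ≤ M * ∑' k : ℕ, ∏ j ∈ Finset.range (n + k + 1), lam j := by
  have hlpos : ∀ j, 0 < lam j := fun j => (hlam j).1
  have hprodpos : ∀ n, 0 < ∏ j ∈ Finset.range (n + 1), lam j := fun n =>
    Finset.prod_pos (fun j _ => hlpos j)
  have hM0 : 0 ≤ M := le_trans dist_nonneg (hM 0)
  -- Lipschitz bound for S n
  have hSlip : ∀ n a b, dist (S n a) (S n b) ≤ (∏ j ∈ Finset.range (n + 1), lam j) * dist a b := by
    intro n
    induction n with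
    | zero => intro a b; simpa [hS0] using hcontr 0 a b
    | succ n ih =>
      intro a b
      rw [hSsucc n a, hSsucc n b]
      calc dist (S n (T (n+1) a)) (S n (T (n+1) b))
          ≤ (∏ j ∈ Finset.range (n + 1), lam j) * dist (T (n+1) a) (T (n+1) b) := ih _ _
        _ ≤ (∏ j ∈ Finset.range (n + 1), lam j) * (lam (n+1) * dist a b) := by
            exact mul_le_mul_of_nonneg_left (hcontr (n+1) a b) (hprodpos n).le
        _ = (∏ j ∈ Finset.range (n + 1 + 1), lam j) * dist a b := by
            rw [Finset.prod_range_succ lam (n+1)]; ring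
  -- one-step bound
  have hstep : ∀ m, dist (S (m + 1) x) (S m x) ≤ M * ∏ j ∈ Finset.range (m + 1), lam j := by
    intro m
    rw [hSsucc m x]
    calc dist (S m (T (m+1) x)) (S m x)
        ≤ (∏ j ∈ Finset.range (m + 1), lam j) * dist (T (m+1) x) x := hSlip m _ _
      _ ≤ (∏ j ∈ Finset.range (m + 1), lam j) * M :=
          mul_le_mul_of_nonneg_left (hM (m+1)) (hprodpos m).le
      _ = M * ∏ j ∈ Finset.range (m + 1), lam j := mul_comm _ _
  intro n p
  have hsum' : Summable (fun k => ∏ j ∈ Finset.range (n + k + 1), lam j) := by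
    have := (summable_nat_add_iff (f := fun m => ∏ j ∈ Finset.range (m + 1), lam j) n).2 hsum
    simpa [Nat.add_comm] using this
  -- partial sum bound by induction on p
  have key : dist (S (n + p) x) (S n x) ≤
      M * ∑ k ∈ Finset.range p, ∏ j ∈ Finset.range (n + k + 1), lam j := by
    induction p with
    | zero => simp
    | succ p ih =>
      calc dist (S (n + (p+1)) x) (S n x)
          ≤ dist (S (n + (p+1)) x) (S (n + p) x) + dist (S (n + p) x) (S n x) :=
            dist_triangle _ _ _
        _ ≤ M * ∏ j ∈ Finset.range (n + p + 1), lam j +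
            M * ∑ k ∈ Finset.range p, ∏ j ∈ Finset.range (n + k + 1), lam j := by
            exact add_le_add (hstep (n + p)) ih
        _ = M * ∑ k ∈ Finset.range (p+1), ∏ j ∈ Finset.range (n + k + 1), lam j := by
            rw [Finset.sum_range_succ]; ring
  refine key.trans (mul_le_mul_of_nonneg_left ?_ hM0)
  exact Summable.sum_le_tsum _ (fun k _ => (Finset.prod_pos (fun j _ => hlpos j)).le) hsum'
end

section
/- Let F be a translation limit fractal with p_n ≥ 2 similarities of common ratio λ_n at stage n, sup_n p_n < ∞, satisfying the open set condition with a regular open set V. Then the Hausdorff dimension of F equals liminf_{n→∞} (log P_n)/(log 1/Λ_n), where P_n = ∏_{i=1}^n p_i and Λ_n = ∏_{i=1}^n λ_i. -/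
open Filter MeasureTheory Set

/-- Composition of the maps `w (k, σ k)` along a word `σ` of length `n`. -/
def compWord {X : Type*} (w : ℕ → ℕ → X → X) : (n : ℕ) → (Fin n → ℕ) → X → X
  | 0, _, x => x
  | n + 1, σ, x => compWord w n (fun k => σ k.castSucc) (w n (σ (Fin.last n)) x)

/-- The limit fractal determined by the contractions `w n j`, `j < p n`,
as the intersection of the successive images of the compact set `C`. -/
def limitSet {X : Type*} (w : ℕ → ℕ → X → X) (p : ℕ → ℕ) (C : Set X) : Set X :=
  ⋂ n, ⋃ (σ : Fin n → ℕ) (_ : ∀ k, σ k < p k), compWord w n σ '' C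

/-!
Upper bound: the `P_n` cylinders `compWord w n σ '' closure V` of level `n` cover the fractal and
have diameter `Λ_n · diam V`, so `μH[d]` of the fractal is finite as soon as `P_n Λ_n ^ d ≤ 1` for
infinitely many `n`.

Lower bound: reading `x ∈ [0, 1)` in the mixed radix `(p 0, p 1, …)` gives an admissible infinite
word, hence a point of the fractal, and the image of Lebesgue measure is a probability measure `μ`
on the fractal with mass at most `1 / P_n` on each cylinder of level `n`. By the open set condition
the cylinders of level `m` contain pairwise disjoint balls of radius `Λ_m ρ`, so a volume count
shows that a ball of radius `r ≤ Λ_m · diam V` meets boundedly many of them; since `p m ≤ pm`, the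
same holds at level `m + 1`, where `Λ_{m+1} · diam V < r`. If `P_n Λ_n ^ d ≥ 1` eventually, this
gives `μ (closedBall z r) ≤ C r ^ d`, and the mass distribution principle gives
`μH[d] > 0` on the fractal. Comparing `d` with `log P_n / log (1 / Λ_n)` turns both conditions on
`P_n Λ_n ^ d` into conditions on the `liminf`.
-/

open Metric
open scoped ENNReal NNReal Topology Pointwise

namespace LimitFractal

noncomputable section

section General

variable {X Y : Type*}

lemma continuous_of_dist_eq [PseudoMetricSpace X] [PseudoMetricSpace Y] {f : X → Y} {r : ℝ}
    (hf : ∀ a b, dist (f a) (f b) = r * dist a b) : Continuous f :=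
  (LipschitzWith.of_dist_le_mul fun a b => (hf a b).trans_le
    (mul_le_mul_of_nonneg_right (Real.le_coe_toNNReal r) dist_nonneg)).continuous

lemma injective_of_dist_eq [MetricSpace X] [MetricSpace Y] {f : X → Y} {r : ℝ} (hr : 0 < r)
    (hf : ∀ a b, dist (f a) (f b) = r * dist a b) : Function.Injective f := fun a b h => by
  simpa [h, hr.ne'] using hf a b

lemma image_ball_of_dist_eq {E : Type*} [NormedAddCommGroup E] [NormedSpace ℝ E]
    [StrictConvexSpace ℝ E] [FiniteDimensional ℝ E] {f : E → E} {r : ℝ} (hr : 0 < r)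
    (hf : ∀ a b, dist (f a) (f b) = r * dist a b) (x : E) (t : ℝ) :
    f '' ball x t = ball (f x) (r * t) := by
  have hg : Isometry fun z => r⁻¹ • f z := Isometry.of_dist_eq fun a b => by
    rw [dist_smul₀, hf, norm_inv, Real.norm_of_nonneg hr.le, inv_mul_cancel_left₀ hr.ne']
  have : Inhabited E := ⟨0⟩
  -- Mazur–Ulam, plus surjectivity of isometric linear maps in finite dimension.
  let e := hg.affineIsometryOfStrictConvexSpace.toAffineIsometryEquiv rfl
  have hfe : f = fun z => r • e z := funext fun z => (smul_inv_smul₀ hr.ne' (f z)).symm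
  calc f '' ball x t = r • (e '' ball x t) := by rw [hfe, ← image_smul, image_image]
    _ = ball (f x) (r * t) := by
      rw [show ⇑e = e.toIsometryEquiv from rfl, IsometryEquiv.image_ball,
        _root_.smul_ball hr.ne', Real.norm_of_nonneg hr.le, hfe]
      rfl

lemma card_mul_pow_le_of_pairwiseDisjoint_ball {E : Type*} [NormedAddCommGroup E]
    [NormedSpace ℝ E] [FiniteDimensional ℝ E] [MeasurableSpace E] [BorelSpace E]
    (μ : Measure E) [μ.IsAddHaarMeasure] {ι : Type*} {s : Finset ι} {c : ι → E} {a R : ℝ}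
    {z : E} (ha : 0 < a) (hR : 0 ≤ R) (hdisj : (s : Set ι).PairwiseDisjoint fun i => ball (c i) a)
    (hsub : ∀ i ∈ s, ball (c i) a ⊆ closedBall z R) :
    (s.card : ℝ) * a ^ Module.finrank ℝ E ≤ R ^ Module.finrank ℝ E := by
  have h : (s.card : ℝ≥0∞) * ENNReal.ofReal (a ^ Module.finrank ℝ E) * μ (ball 0 1) ≤
      ENNReal.ofReal (R ^ Module.finrank ℝ E) * μ (ball 0 1) :=
    calc _ = ∑ i ∈ s, μ (ball (c i) a) := by
          simp [Measure.addHaar_ball_of_pos μ _ ha, mul_assoc]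
      _ = μ (⋃ i ∈ s, ball (c i) a) :=
          (measure_biUnion_finset hdisj fun _ _ => measurableSet_ball).symm
      _ ≤ μ (closedBall z R) := measure_mono (iUnion₂_subset hsub)
      _ = _ := Measure.addHaar_closedBall μ z hR
  rwa [ENNReal.mul_le_mul_iff_left (measure_ball_pos μ 0 one_pos).ne' measure_ball_lt_top.ne,
    ← ENNReal.ofReal_natCast, ← ENNReal.ofReal_mul (by positivity),
    ENNReal.ofReal_le_ofReal_iff (by positivity)] at h

/-- The mass distribution principle. -/
lemma measure_le_mul_hausdorffMeasure [MetricSpace X] [MeasurableSpace X] [BorelSpace X]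
    (μ : Measure X) {d ε C : ℝ} (hd : 0 < d) (hε : 0 < ε) (hC : 0 < C)
    (hμ : ∀ z r, 0 < r → r ≤ ε → μ (closedBall z r) ≤ ENNReal.ofReal (C * r ^ d)) (s : Set X) :
    μ s ≤ ENNReal.ofReal C * μH[d] s := by
  have hC' : ENNReal.ofReal C ≠ 0 := (ENNReal.ofReal_pos.2 hC).ne'
  suffices (ENNReal.ofReal C)⁻¹ • μ ≤ μH[d] by
    simpa [← mul_assoc, ENNReal.mul_inv_cancel hC' ENNReal.ofReal_ne_top] using
      mul_le_mul_right (this s) (ENNReal.ofReal C)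
  refine Measure.le_hausdorffMeasure d _ (ENNReal.ofReal ε) (ENNReal.ofReal_pos.2 hε)
    fun t ht => ?_
  rw [Measure.smul_apply, smul_eq_mul, ENNReal.inv_mul_le_iff hC' ENNReal.ofReal_ne_top]
  rcases t.eq_empty_or_nonempty with rfl | ⟨z, hz⟩
  · simp
  have hball : ∀ r, 0 < r → r ≤ ε → ediam t ≤ ENNReal.ofReal r →
      μ t ≤ ENNReal.ofReal (C * r ^ d) := fun r hr hrε htr =>
    (measure_mono fun y hy => mem_closedBall.2 (by
      rw [dist_edist, ← ENNReal.toReal_ofReal hr.le]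
      exact ENNReal.toReal_mono ENNReal.ofReal_ne_top
        ((edist_le_ediam_of_mem hy hz).trans htr))).trans (hμ z r hr hrε)
  rcases eq_or_ne (ediam t) 0 with h0 | h0
  · have hlim : Tendsto (fun r => ENNReal.ofReal (C * r ^ d)) (𝓝[>] 0) (𝓝 0) := by
      simpa [Real.zero_rpow hd.ne'] using ENNReal.tendsto_ofReal
        (((Real.continuousAt_rpow_const 0 d (Or.inr hd.le)).tendsto.const_mul C).mono_left
          nhdsWithin_le_nhds)
    have hμt : μ t ≤ 0 := ge_of_tendsto hlim (by
      filter_upwards [Ioc_mem_nhdsGT hε] with r hr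
      exact hball r hr.1 hr.2 (h0.trans_le zero_le))
    exact (le_zero_iff.1 hμt).trans_le zero_le
  · have hne : ediam t ≠ ∞ := (ht.trans_lt ENNReal.ofReal_lt_top).ne
    have hpos : 0 < (ediam t).toReal := ENNReal.toReal_pos h0 hne
    calc μ t ≤ ENNReal.ofReal (C * (ediam t).toReal ^ d) :=
          hball _ hpos (ENNReal.toReal_le_of_le_ofReal hε.le ht) (ENNReal.ofReal_toReal hne).ge
      _ = ENNReal.ofReal C * ediam t ^ d := by
          rw [ENNReal.ofReal_mul hC.le, ← ENNReal.ofReal_rpow_of_pos hpos,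
            ENNReal.ofReal_toReal hne]

lemma exists_le_and_lt_of_tendsto_zero {u : ℕ → ℝ} (hu : Tendsto u atTop (𝓝 0)) {r : ℝ}
    (hr : 0 < r) {n₀ : ℕ} (h : r ≤ u n₀) : ∃ m, n₀ ≤ m ∧ r ≤ u m ∧ u (m + 1) < r := by
  by_contra! H
  have hge : ∀ m, n₀ ≤ m → r ≤ u m := fun m hm => by
    induction m, hm using Nat.le_induction with
    | base => exact h
    | succ m hm ih => exact H m hm ih
  obtain ⟨m, hm, hm₀⟩ := ((hu.eventually (gt_mem_nhds hr)).and (eventually_ge_atTop n₀)).exists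
  exact (hge m hm₀).not_gt hm

lemma log_div_log_one_div_le_iff {P Λ d : ℝ} (hP : 0 < P) (hΛ₀ : 0 < Λ) (hΛ₁ : Λ < 1) :
    Real.log P / Real.log (1 / Λ) ≤ d ↔ P * Λ ^ d ≤ 1 := by
  rw [div_le_iff₀ (Real.log_pos (one_lt_one_div hΛ₀ hΛ₁)),
    ← Real.log_le_log_iff (mul_pos hP (Real.rpow_pos_of_pos hΛ₀ d)) one_pos,
    Real.log_mul hP.ne' (Real.rpow_pos_of_pos hΛ₀ d).ne', Real.log_rpow hΛ₀, Real.log_one,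
    one_div, Real.log_inv]
  constructor <;> intro h <;> linarith

lemma _root_.ENNReal.eq_ofReal_of_forall {x : ℝ≥0∞} {L : ℝ}
    (hle : ∀ d, L < d → x ≤ ENNReal.ofReal d)
    (hge : ∀ d, 0 < d → d < L → ENNReal.ofReal d ≤ x) : x = ENNReal.ofReal L := by
  refine le_antisymm (le_of_forall_gt_imp_ge_of_dense fun y hy => ?_)
    (le_of_forall_lt_imp_le_of_dense fun y hy => ?_)
  · rcases eq_or_ne y ∞ with rfl | hy'
    · exact le_top
    rw [← ENNReal.ofReal_toReal hy']
    exact hle _ ((le_max_left L 0).trans_lt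
      (by rw [← ENNReal.toReal_ofReal']; exact ENNReal.toReal_strict_mono hy' hy))
  · rcases eq_or_ne y 0 with rfl | hy₀
    · exact zero_le
    rw [← ENNReal.ofReal_toReal hy.ne_top]
    exact hge _ (ENNReal.toReal_pos hy₀ hy.ne_top) (ENNReal.toReal_lt_of_lt_ofReal hy)

lemma mul_floor_le_floor_mul (y : ℝ) (q : ℕ) : (q : ℤ) * ⌊y⌋ ≤ ⌊y * q⌋ :=
  Int.le_floor.2 (by push_cast; nlinarith [Int.floor_le y, (q.cast_nonneg : (0 : ℝ) ≤ q)])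

lemma floor_mul_lt_mul_floor_add_one (y : ℝ) {q : ℕ} (hq : 0 < q) : ⌊y * q⌋ < q * (⌊y⌋ + 1) :=
  Int.floor_lt.2 (by
    push_cast
    nlinarith [Int.lt_floor_add_one y, (Nat.cast_pos.2 hq : (0 : ℝ) < q)])

lemma volume_setOf_floor_mul_eq {q : ℝ} (hq : 0 < q) (a : ℤ) :
    volume {x : ℝ | ⌊x * q⌋ = a} = ENNReal.ofReal q⁻¹ := by
  have : {x : ℝ | ⌊x * q⌋ = a} = (· * q) ⁻¹' Ico (a : ℝ) (a + 1) := by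
    ext x; simp [Int.floor_eq_iff]
  rw [this, Real.volume_preimage_mul_right hq.ne', Real.volume_Ico, add_sub_cancel_left,
    ENNReal.ofReal_one, mul_one, abs_of_pos (inv_pos.2 hq)]

end General

variable {X : Type*} {w : ℕ → ℕ → X → X} {p : ℕ → ℕ} {lam : ℕ → ℝ} {c : ℝ}

/-- `Λ_n` in the notation of the paper. -/
def cumRatio (lam : ℕ → ℝ) (n : ℕ) : ℝ := ∏ i ∈ Finset.range n, lam i

/-- `P_n` in the notation of the paper. -/
def cumCount (p : ℕ → ℕ) (n : ℕ) : ℕ := ∏ i ∈ Finset.range n, p i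

lemma cumRatio_succ (lam : ℕ → ℝ) (n : ℕ) : cumRatio lam (n + 1) = cumRatio lam n * lam n :=
  Finset.prod_range_succ _ _

lemma cumCount_succ (p : ℕ → ℕ) (n : ℕ) : cumCount p (n + 1) = cumCount p n * p n :=
  Finset.prod_range_succ _ _

lemma cumRatio_pos (hlam : ∀ n, 0 < lam n) (n : ℕ) : 0 < cumRatio lam n :=
  Finset.prod_pos fun i _ => hlam i

lemma cumRatio_nonneg (hlam : ∀ n, 0 ≤ lam n) (n : ℕ) : 0 ≤ cumRatio lam n :=
  Finset.prod_nonneg fun i _ => hlam i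

lemma cumCount_pos (hp : ∀ n, 0 < p n) (n : ℕ) : 0 < cumCount p n :=
  Finset.prod_pos fun i _ => hp i

lemma cumRatio_le_pow (hlam : ∀ n, 0 ≤ lam n) (hc : ∀ n, lam n ≤ c) (n : ℕ) :
    cumRatio lam n ≤ c ^ n := by
  simpa [cumRatio] using
    Finset.prod_le_prod (s := Finset.range n) (fun i _ => hlam i) fun i _ => hc i

lemma tendsto_cumRatio (hlam : ∀ n, 0 ≤ lam n) (hc1 : c < 1) (hc : ∀ n, lam n ≤ c) :
    Tendsto (cumRatio lam) atTop (𝓝 0) :=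
  squeeze_zero (cumRatio_nonneg hlam) (cumRatio_le_pow hlam hc)
    (tendsto_pow_atTop_nhds_zero_of_lt_one ((hlam 0).trans (hc 0)) hc1)

lemma cumRatio_lt_one (hlam : ∀ n, 0 ≤ lam n) (hc1 : c < 1) (hc : ∀ n, lam n ≤ c) {n : ℕ}
    (hn : n ≠ 0) : cumRatio lam n < 1 :=
  (cumRatio_le_pow hlam hc n).trans_lt (pow_lt_one₀ ((hlam 0).trans (hc 0)) hc1 hn)

def dimRatio (p : ℕ → ℕ) (lam : ℕ → ℝ) (n : ℕ) : ℝ :=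
  Real.log (cumCount p n) / Real.log (1 / cumRatio lam n)

lemma dimRatio_nonneg (hlam : ∀ n, 0 < lam n) (hc1 : c < 1) (hc : ∀ n, lam n ≤ c) (n : ℕ) :
    0 ≤ dimRatio p lam n :=
  div_nonneg (Real.log_natCast_nonneg _) (Real.log_nonneg (one_le_one_div (cumRatio_pos hlam n)
    ((cumRatio_le_pow (fun n => (hlam n).le) hc n).trans
      (pow_le_one₀ ((hlam 0).trans_le (hc 0)).le hc1.le))))

lemma dimRatio_le_iff (hp : ∀ n, 0 < p n) (hlam : ∀ n, 0 < lam n) (hc1 : c < 1)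
    (hc : ∀ n, lam n ≤ c) {n : ℕ} (hn : n ≠ 0) (d : ℝ) :
    dimRatio p lam n ≤ d ↔ (cumCount p n : ℝ) * cumRatio lam n ^ d ≤ 1 :=
  log_div_log_one_div_le_iff (Nat.cast_pos.2 (cumCount_pos hp n)) (cumRatio_pos hlam n)
    (cumRatio_lt_one (fun n => (hlam n).le) hc1 hc hn)

lemma dimRatio_le (hp : ∀ n, 0 < p n) {pm : ℕ} (hpm : ∀ n, p n ≤ pm)
    (hlam : ∀ n, 0 < lam n) (hc1 : c < 1) (hc : ∀ n, lam n ≤ c) {n : ℕ} (hn : n ≠ 0) :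
    dimRatio p lam n ≤ Real.log pm / Real.log (1 / c) := by
  have hc₀ : 0 < c := (hlam 0).trans_le (hc 0)
  have hΛ := cumRatio_pos hlam n
  have hlogc : 0 < Real.log (1 / c) := Real.log_pos (one_lt_one_div hc₀ hc1)
  have hnum : Real.log (cumCount p n) ≤ n * Real.log pm := by
    rw [← Real.log_pow, ← Nat.cast_pow]
    exact Real.log_le_log (Nat.cast_pos.2 (cumCount_pos hp n)) (Nat.cast_le.2
      (by simpa [cumCount] using Finset.prod_le_pow_card (Finset.range n) p pm fun i _ => hpm i))
  have hden : n * Real.log (1 / c) ≤ Real.log (1 / cumRatio lam n) := by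
    rw [← Real.log_pow, one_div_pow]
    exact Real.log_le_log (by positivity)
      (one_div_le_one_div_of_le hΛ (cumRatio_le_pow (fun n => (hlam n).le) hc n))
  rw [dimRatio, div_le_div_iff₀ (Real.log_pos (one_lt_one_div hΛ
    (cumRatio_lt_one (fun n => (hlam n).le) hc1 hc hn))) hlogc]
  nlinarith [Real.log_natCast_nonneg pm]

def words (p : ℕ → ℕ) (n : ℕ) : Finset (Fin n → ℕ) :=
  Fintype.piFinset fun k => Finset.range (p k)

lemma mem_words {n : ℕ} {σ : Fin n → ℕ} : σ ∈ words p n ↔ ∀ k, σ k < p k := by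
  simp [words]

lemma card_words (p : ℕ → ℕ) (n : ℕ) : (words p n).card = cumCount p n := by
  simp [words, cumCount, Finset.prod_range]

lemma limitSet_eq (K : Set X) :
    limitSet w p K = ⋂ n, ⋃ σ ∈ words p n, compWord w n σ '' K := by
  simp [limitSet, mem_words]

lemma compWord_succ_image {n : ℕ} (σ : Fin (n + 1) → ℕ) (S : Set X) :
    compWord w (n + 1) σ '' S =
      compWord w n (fun k => σ k.castSucc) '' (w n (σ (Fin.last n)) '' S) := by
  rw [image_image]; rfl

lemma mapsTo_compWord {K : Set X} (hK : ∀ n i, i < p n → MapsTo (w n i) K K) :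
    ∀ {n : ℕ} {σ : Fin n → ℕ}, (∀ k, σ k < p k) → MapsTo (compWord w n σ) K K
  | 0, _, _ => mapsTo_id K
  | n + 1, _, hσ =>
    (mapsTo_compWord hK fun k => hσ k.castSucc).comp (hK n _ (hσ (Fin.last n)))

lemma compWord_mem_image_of_le {K : Set X} (hK : ∀ n i, i < p n → MapsTo (w n i) K K)
    {τ : ℕ → ℕ} (hτ : ∀ k, τ k < p k) {x : X} (hx : x ∈ K) {n m : ℕ} (hnm : n ≤ m) :
    compWord w m (fun k => τ k) x ∈ compWord w n (fun k => τ k) '' K := by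
  induction m, hnm using Nat.le_induction generalizing x with
  | base => exact mem_image_of_mem _ hx
  | succ m _ ih => exact ih (hK m _ (hτ m) hx)

lemma injective_compWord (hinj : ∀ n i, i < p n → Function.Injective (w n i)) :
    ∀ {n : ℕ} {σ : Fin n → ℕ}, (∀ k, σ k < p k) → Function.Injective (compWord w n σ)
  | 0, _, _ => Function.injective_id
  | n + 1, _, hσ =>
    (injective_compWord hinj fun k => hσ k.castSucc).comp (hinj n _ (hσ (Fin.last n)))

lemma disjoint_compWord_image {V : Set X} (hinj : ∀ n i, i < p n → Function.Injective (w n i))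
    (hmaps : ∀ n i, i < p n → w n i '' V ⊆ V)
    (hdisj : ∀ n i j, i < p n → j < p n → i ≠ j → Disjoint (w n i '' V) (w n j '' V)) :
    ∀ {n : ℕ} {σ τ : Fin n → ℕ}, (∀ k, σ k < p k) → (∀ k, τ k < p k) → σ ≠ τ →
      Disjoint (compWord w n σ '' V) (compWord w n τ '' V)
  | 0, σ, τ, _, _, hne => absurd (funext finZeroElim) hne
  | n + 1, σ, τ, hσ, hτ, hne => by
    rw [compWord_succ_image, compWord_succ_image]
    by_cases hinit : (fun k : Fin n => σ k.castSucc) = fun k => τ k.castSucc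
    · have hlast : σ (Fin.last n) ≠ τ (Fin.last n) := fun hl =>
        hne (funext fun k => Fin.lastCases hl (congrFun hinit) k)
      rw [hinit]
      exact disjoint_image_of_injective (injective_compWord hinj fun k => hτ k.castSucc)
        (hdisj n _ _ (hσ _) (hτ _) hlast)
    · exact (disjoint_compWord_image hinj hmaps hdisj (fun k => hσ k.castSucc)
        (fun k => hτ k.castSucc) hinit).mono
        (image_mono (hmaps n _ (hσ _))) (image_mono (hmaps n _ (hτ _)))

def wordsMeeting (w : ℕ → ℕ → X → X) (p : ℕ → ℕ) (K B : Set X) (n : ℕ) :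
    Finset (Fin n → ℕ) := by
  classical exact (words p n).filter fun σ => (compWord w n σ '' K ∩ B).Nonempty

lemma mem_wordsMeeting {K B : Set X} {n : ℕ} {σ : Fin n → ℕ} :
    σ ∈ wordsMeeting w p K B n ↔ (∀ k, σ k < p k) ∧ (compWord w n σ '' K ∩ B).Nonempty := by
  classical simp [wordsMeeting, mem_words]

lemma card_wordsMeeting_succ_le {K : Set X} (hK : ∀ n i, i < p n → MapsTo (w n i) K K)
    (B : Set X) (m : ℕ) :
    (wordsMeeting w p K B (m + 1)).card ≤ (wordsMeeting w p K B m).card * p m := by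
  classical
  rw [mul_comm]
  refine Finset.card_le_mul_card_image_of_maps_to
    (f := fun (σ : Fin (m + 1) → ℕ) k => σ (Fin.castSucc k)) ?_ _ fun τ _ => ?_
  · simp only [mem_wordsMeeting]
    rintro σ ⟨hσ, y, hy, hyB⟩
    refine ⟨fun k => hσ k.castSucc, y, ?_, hyB⟩
    rw [compWord_succ_image] at hy
    exact image_mono (image_subset_iff.2 (hK m _ (hσ _))) hy
  refine (Finset.card_le_card_of_injOn (fun σ => σ (Fin.last m)) (t := Finset.range (p m))
    (fun σ hσ => ?_) fun σ hσ σ' hσ' hlast => ?_).trans (Finset.card_range _).le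
  · simp only [Finset.coe_filter, mem_wordsMeeting] at hσ
    exact Finset.mem_coe.2 (Finset.mem_range.2 (hσ.1.1 _))
  · simp only [Finset.coe_filter, mem_wordsMeeting] at hσ hσ'
    exact funext fun k => Fin.lastCases hlast
      (fun j => (congrFun hσ.2 j).trans (congrFun hσ'.2 j).symm) k

section Metric

variable [MetricSpace X] {K : Set X} {x₀ : X}

lemma dist_compWord
    (hsim : ∀ n i, i < p n → ∀ a b, dist (w n i a) (w n i b) = lam n * dist a b) :
    ∀ {n : ℕ} {σ : Fin n → ℕ}, (∀ k, σ k < p k) → ∀ a b,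
      dist (compWord w n σ a) (compWord w n σ b) = cumRatio lam n * dist a b
  | 0, _, _, a, b => by simp [compWord, cumRatio]
  | n + 1, σ, hσ, a, b => by
    rw [compWord, compWord, dist_compWord hsim (fun k => hσ k.castSucc),
      hsim n _ (hσ (Fin.last n)), cumRatio_succ, mul_assoc]

lemma mapsTo_closure_of_dist_eq
    (hsim : ∀ n i, i < p n → ∀ a b, dist (w n i a) (w n i b) = lam n * dist a b) {V : Set X}
    (hmaps : ∀ n i, i < p n → w n i '' V ⊆ V) (n i : ℕ) (hi : i < p n) :
    MapsTo (w n i) (closure V) (closure V) :=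
  (mapsTo_iff_image_subset.2 (hmaps n i hi)).closure (continuous_of_dist_eq (hsim n i hi))

lemma isClosed_limitSet
    (hsim : ∀ n i, i < p n → ∀ a b, dist (w n i a) (w n i b) = lam n * dist a b)
    (hK : IsCompact K) : IsClosed (limitSet w p K) := by
  rw [limitSet_eq]
  exact isClosed_iInter fun n => (words p n).finite_toSet.isClosed_biUnion fun σ hσ =>
    (hK.image (continuous_of_dist_eq (dist_compWord hsim (mem_words.1 hσ)))).isClosed

/-- The point coded by the infinite word `τ`; the limit exists when `τ` is admissible
(`tendsto_codePoint`). -/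
def codePoint (w : ℕ → ℕ → X → X) (x₀ : X) (τ : ℕ → ℕ) : X :=
  haveI : Nonempty X := ⟨x₀⟩
  limUnder atTop fun n => compWord w n (fun k => τ k) x₀

lemma tendsto_codePoint
    (hsim : ∀ n i, i < p n → ∀ a b, dist (w n i a) (w n i b) = lam n * dist a b)
    (hlam : ∀ n, 0 ≤ lam n) (hc1 : c < 1) (hc : ∀ n, lam n ≤ c)
    (hK : IsCompact K) (hKw : ∀ n i, i < p n → MapsTo (w n i) K K) (hx₀ : x₀ ∈ K)
    {τ : ℕ → ℕ} (hτ : ∀ k, τ k < p k) :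
    Tendsto (fun n => compWord w n (fun k => τ k) x₀) atTop (𝓝 (codePoint w x₀ τ)) := by
  have hcauchy : CauchySeq fun n => compWord w n (fun k => τ k) x₀ :=
    cauchySeq_of_le_geometric c (diam K) hc1 fun n => by
      calc dist (compWord w n (fun k => τ k) x₀) (compWord w n (fun k => τ k) (w n (τ n) x₀))
          = cumRatio lam n * dist x₀ (w n (τ n) x₀) := dist_compWord hsim (fun k => hτ k) _ _
        _ ≤ c ^ n * diam K := mul_le_mul (cumRatio_le_pow hlam hc n)
            (dist_le_diam_of_mem hK.isBounded hx₀ (hKw n _ (hτ n) hx₀)) dist_nonneg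
            (pow_nonneg ((hlam 0).trans (hc 0)) n)
        _ = diam K * c ^ n := mul_comm _ _
  obtain ⟨y, -, hy⟩ := cauchySeq_tendsto_of_isComplete hK.isComplete
    (fun n => mapsTo_compWord hKw (fun k => hτ k) hx₀) hcauchy
  have : Nonempty X := ⟨x₀⟩
  exact tendsto_nhds_limUnder ⟨y, hy⟩

lemma codePoint_mem_image
    (hsim : ∀ n i, i < p n → ∀ a b, dist (w n i a) (w n i b) = lam n * dist a b)
    (hlam : ∀ n, 0 ≤ lam n) (hc1 : c < 1) (hc : ∀ n, lam n ≤ c)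
    (hK : IsCompact K) (hKw : ∀ n i, i < p n → MapsTo (w n i) K K) (hx₀ : x₀ ∈ K)
    {τ : ℕ → ℕ} (hτ : ∀ k, τ k < p k) (n : ℕ) :
    codePoint w x₀ τ ∈ compWord w n (fun k => τ k) '' K :=
  (hK.image (continuous_of_dist_eq (dist_compWord hsim fun k => hτ k))).isClosed.mem_of_tendsto
    (tendsto_codePoint hsim hlam hc1 hc hK hKw hx₀ hτ)
    ((eventually_ge_atTop n).mono fun _ hm => compWord_mem_image_of_le hKw hτ hx₀ hm)

lemma codePoint_mem_limitSet
    (hsim : ∀ n i, i < p n → ∀ a b, dist (w n i a) (w n i b) = lam n * dist a b)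
    (hlam : ∀ n, 0 ≤ lam n) (hc1 : c < 1) (hc : ∀ n, lam n ≤ c)
    (hK : IsCompact K) (hKw : ∀ n i, i < p n → MapsTo (w n i) K K) (hx₀ : x₀ ∈ K)
    {τ : ℕ → ℕ} (hτ : ∀ k, τ k < p k) : codePoint w x₀ τ ∈ limitSet w p K :=
  mem_iInter.2 fun n => mem_iUnion₂.2
    ⟨_, fun k => hτ k, codePoint_mem_image hsim hlam hc1 hc hK hKw hx₀ hτ n⟩

lemma dimH_limitSet_le
    (hsim : ∀ n i, i < p n → ∀ a b, dist (w n i a) (w n i b) = lam n * dist a b)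
    (hlam : ∀ n, 0 ≤ lam n) (hc1 : c < 1) (hc : ∀ n, lam n ≤ c)
    (hK : Bornology.IsBounded K) {d : ℝ} (hd : 0 ≤ d)
    (hfreq : ∃ᶠ n in atTop, (cumCount p n : ℝ) * cumRatio lam n ^ d ≤ 1) :
    dimH (limitSet w p K) ≤ ENNReal.ofReal d := by
  borelize X
  have hcyl : ∀ n, ∀ σ ∈ words p n,
      ediam (compWord w n σ '' K) ≤ ENNReal.ofReal (cumRatio lam n * diam K) :=
    fun n σ hσ => ediam_le_of_forall_dist_le <| by
      rintro _ ⟨a, ha, rfl⟩ _ ⟨b, hb, rfl⟩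
      rw [dist_compWord hsim (mem_words.1 hσ)]
      exact mul_le_mul_of_nonneg_left (dist_le_diam_of_mem hK ha hb) (cumRatio_nonneg hlam n)
  have hcover : μH[d] (limitSet w p K) ≤
      liminf (fun n => ∑ σ : words p n, ediam (compWord w n σ '' K) ^ d) atTop :=
    Measure.hausdorffMeasure_le_liminf_sum (ι := fun n => words p n) d _
      (fun n => ENNReal.ofReal (cumRatio lam n * diam K))
      (by simpa using ENNReal.tendsto_ofReal ((tendsto_cumRatio hlam hc1 hc).mul_const (diam K)))
      (fun n σ => compWord w n σ '' K) (.of_forall fun n σ => hcyl n σ σ.2)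
      (.of_forall fun n => by
        rw [limitSet_eq, iUnion_subtype]
        exact iInter_subset (fun n => ⋃ σ ∈ words p n, compWord w n σ '' K) n)
  have hsum : ∃ᶠ n in atTop,
      ∑ σ : words p n, ediam (compWord w n σ '' K) ^ d ≤ ENNReal.ofReal (diam K ^ d) :=
    hfreq.mono fun n hn => by
      calc ∑ σ : words p n, ediam (compWord w n σ '' K) ^ d
          ≤ ∑ _σ : words p n, ENNReal.ofReal ((cumRatio lam n * diam K) ^ d) :=
            Finset.sum_le_sum fun σ _ => by
              rw [← ENNReal.ofReal_rpow_of_nonneg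
                (mul_nonneg (cumRatio_nonneg hlam n) diam_nonneg) hd]
              exact ENNReal.rpow_le_rpow (hcyl n σ σ.2) hd
        _ = ENNReal.ofReal (cumCount p n * cumRatio lam n ^ d * diam K ^ d) := by
            rw [Finset.sum_const, Finset.card_univ, Fintype.card_coe, card_words, nsmul_eq_mul,
              ← ENNReal.ofReal_natCast, ← ENNReal.ofReal_mul (Nat.cast_nonneg _),
              Real.mul_rpow (cumRatio_nonneg hlam n) diam_nonneg, mul_assoc]
        _ ≤ ENNReal.ofReal (diam K ^ d) := ENNReal.ofReal_le_ofReal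
            (mul_le_of_le_one_left (Real.rpow_nonneg diam_nonneg d) hn)
  have hfin : μH[(d.toNNReal : ℝ)] (limitSet w p K) ≠ ∞ := by
    rw [Real.coe_toNNReal d hd]
    exact ((hcover.trans (liminf_le_of_frequently_le' hsum)).trans_lt ENNReal.ofReal_lt_top).ne
  exact dimH_le_of_hausdorffMeasure_ne_top hfin

end Metric

/-- `digit p x k` is the `k`-th digit of `x` in the mixed radix `(p 0, p 1, …)`. -/
def digit (p : ℕ → ℕ) (x : ℝ) (k : ℕ) : ℕ :=
  (⌊x * cumCount p (k + 1)⌋ - p k * ⌊x * cumCount p k⌋).toNat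

lemma floor_mul_cumCount_succ (x : ℝ) (k : ℕ) :
    ⌊x * cumCount p (k + 1)⌋ = p k * ⌊x * cumCount p k⌋ + digit p x k := by
  have h := mul_floor_le_floor_mul (x * cumCount p k) (p k)
  rw [digit, cumCount_succ, Nat.cast_mul, ← mul_assoc, Int.toNat_of_nonneg (sub_nonneg.2 h)]
  ring

lemma digit_lt (hp : ∀ n, 0 < p n) (x : ℝ) (k : ℕ) : digit p x k < p k := by
  have h := floor_mul_lt_mul_floor_add_one (x * cumCount p k) (hp k)
  rw [mul_assoc, ← Nat.cast_mul, ← cumCount_succ, floor_mul_cumCount_succ, mul_add,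
    mul_one] at h
  omega

lemma floor_mul_cumCount_eq {x y : ℝ} (hxy : ⌊x⌋ = ⌊y⌋) :
    ∀ {n : ℕ}, (∀ k < n, digit p x k = digit p y k) → ⌊x * cumCount p n⌋ = ⌊y * cumCount p n⌋
  | 0, _ => by simpa [cumCount] using hxy
  | n + 1, h => by
    rw [floor_mul_cumCount_succ, floor_mul_cumCount_succ,
      floor_mul_cumCount_eq hxy fun k hk => h k (by omega), h n n.lt_succ_self]

lemma measurable_digit (k : ℕ) : Measurable fun x : ℝ => digit p x k :=
  (Measurable.of_discrete (f := fun z : ℤ × ℤ => (z.1 - p k * z.2).toNat)).comp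
    ((Int.measurable_floor.comp (measurable_id.mul_const _)).prodMk
      (Int.measurable_floor.comp (measurable_id.mul_const _)))

lemma volume_digit_eq_le (hp : ∀ n, 0 < p n) {n : ℕ} (σ : Fin n → ℕ) :
    volume {x ∈ Ico (0 : ℝ) 1 | ∀ k : Fin n, digit p x k = σ k} ≤
      ENNReal.ofReal (cumCount p n : ℝ)⁻¹ := by
  rcases eq_empty_or_nonempty {x ∈ Ico (0 : ℝ) 1 | ∀ k : Fin n, digit p x k = σ k}
    with h | ⟨y, hy⟩
  · rw [h, measure_empty]; exact zero_le
  rw [← volume_setOf_floor_mul_eq (Nat.cast_pos.2 (cumCount_pos hp n)) ⌊y * cumCount p n⌋]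
  refine measure_mono fun x hx => floor_mul_cumCount_eq ?_ fun k hk => ?_
  · rw [Int.floor_eq_zero_iff.2 hx.1, Int.floor_eq_zero_iff.2 hy.1]
  · exact (hx.2 ⟨k, hk⟩).trans (hy.2 ⟨k, hk⟩).symm

section NaturalMeasure

variable [MetricSpace X] [MeasurableSpace X] [BorelSpace X] {K : Set X} {x₀ : X}

def naturalMeasure (w : ℕ → ℕ → X → X) (p : ℕ → ℕ) (x₀ : X) : Measure X :=
  (volume.restrict (Ico (0 : ℝ) 1)).map fun x => codePoint w x₀ (digit p x)

lemma measurable_codePoint_digit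
    (hsim : ∀ n i, i < p n → ∀ a b, dist (w n i a) (w n i b) = lam n * dist a b)
    (hlam : ∀ n, 0 ≤ lam n) (hc1 : c < 1) (hc : ∀ n, lam n ≤ c)
    (hK : IsCompact K) (hKw : ∀ n i, i < p n → MapsTo (w n i) K K) (hx₀ : x₀ ∈ K)
    (hp : ∀ n, 0 < p n) : Measurable fun x : ℝ => codePoint w x₀ (digit p x) := by
  refine measurable_of_tendsto_metrizable
    (f := fun n x => compWord w n (fun k => digit p x k) x₀) (fun n => ?_)
    (tendsto_pi_nhds.2 fun x => tendsto_codePoint hsim hlam hc1 hc hK hKw hx₀ (digit_lt hp x))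
  exact (Measurable.of_discrete (f := fun σ : Fin n → ℕ => compWord w n σ x₀)).comp
    (measurable_pi_lambda _ fun k => measurable_digit k)

lemma naturalMeasure_limitSet
    (hsim : ∀ n i, i < p n → ∀ a b, dist (w n i a) (w n i b) = lam n * dist a b)
    (hlam : ∀ n, 0 ≤ lam n) (hc1 : c < 1) (hc : ∀ n, lam n ≤ c)
    (hK : IsCompact K) (hKw : ∀ n i, i < p n → MapsTo (w n i) K K) (hx₀ : x₀ ∈ K)
    (hp : ∀ n, 0 < p n) : naturalMeasure w p x₀ (limitSet w p K) = 1 := by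
  have hF : Ico 0 1 ⊆ (fun x => codePoint w x₀ (digit p x)) ⁻¹' limitSet w p K := fun x _ =>
    codePoint_mem_limitSet hsim hlam hc1 hc hK hKw hx₀ (digit_lt hp x)
  rw [naturalMeasure,
    Measure.map_apply (measurable_codePoint_digit hsim hlam hc1 hc hK hKw hx₀ hp)
      (isClosed_limitSet hsim hK).measurableSet,
    Measure.restrict_apply' measurableSet_Ico, inter_eq_self_of_subset_right hF]
  simp

lemma naturalMeasure_le_card_wordsMeeting
    (hsim : ∀ n i, i < p n → ∀ a b, dist (w n i a) (w n i b) = lam n * dist a b)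
    (hlam : ∀ n, 0 ≤ lam n) (hc1 : c < 1) (hc : ∀ n, lam n ≤ c)
    (hK : IsCompact K) (hKw : ∀ n i, i < p n → MapsTo (w n i) K K) (hx₀ : x₀ ∈ K)
    (hp : ∀ n, 0 < p n) {B : Set X} (hB : MeasurableSet B) (n : ℕ) :
    naturalMeasure w p x₀ B ≤
      (wordsMeeting w p K B n).card * ENNReal.ofReal (cumCount p n : ℝ)⁻¹ := by
  have hsub : (fun x => codePoint w x₀ (digit p x)) ⁻¹' B ∩ Ico 0 1 ⊆
      ⋃ σ ∈ wordsMeeting w p K B n, {x ∈ Ico (0 : ℝ) 1 | ∀ k : Fin n, digit p x k = σ k} :=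
    fun x ⟨hxB, hx⟩ => mem_iUnion₂.2 ⟨fun k => digit p x k, mem_wordsMeeting.2
      ⟨fun k => digit_lt hp x k, _, codePoint_mem_image hsim hlam hc1 hc hK hKw hx₀
        (digit_lt hp x) n, hxB⟩, hx, fun _ => rfl⟩
  rw [naturalMeasure,
    Measure.map_apply (measurable_codePoint_digit hsim hlam hc1 hc hK hKw hx₀ hp) hB,
    Measure.restrict_apply' measurableSet_Ico]
  calc _ ≤ ∑ σ ∈ wordsMeeting w p K B n,
        volume {x ∈ Ico (0 : ℝ) 1 | ∀ k : Fin n, digit p x k = σ k} :=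
        (measure_mono hsub).trans (measure_biUnion_finset_le _ _)
    _ ≤ ∑ _σ ∈ wordsMeeting w p K B n, ENNReal.ofReal (cumCount p n : ℝ)⁻¹ :=
        Finset.sum_le_sum fun σ _ => volume_digit_eq_le hp σ
    _ = _ := by rw [Finset.sum_const, nsmul_eq_mul]

end NaturalMeasure

section Euclidean

variable {E : Type*} [NormedAddCommGroup E] [NormedSpace ℝ E] [StrictConvexSpace ℝ E]
  [FiniteDimensional ℝ E] [MeasurableSpace E] [BorelSpace E]
  {w : ℕ → ℕ → E → E} {V : Set E} {x₀ : E} {ρ : ℝ}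

/-- A cylinder of level `m` meeting `closedBall z r` lies in `closedBall z (2 Λ_m diam V)` and
contains the ball of radius `Λ_m ρ` around its copy of `x₀`; these balls are pairwise disjoint. -/
lemma card_wordsMeeting_closedBall_le
    (hsim : ∀ n i, i < p n → ∀ a b, dist (w n i a) (w n i b) = lam n * dist a b)
    (hlam : ∀ n, 0 < lam n) (hmaps : ∀ n i, i < p n → w n i '' V ⊆ V)
    (hdisj : ∀ n i j, i < p n → j < p n → i ≠ j → Disjoint (w n i '' V) (w n j '' V))
    (hV : Bornology.IsBounded V) (hρ : 0 < ρ) (hball : ball x₀ ρ ⊆ V) (z : E) {r : ℝ} {m : ℕ}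
    (hr : r ≤ cumRatio lam m * diam (closure V)) :
    ((wordsMeeting w p (closure V) (closedBall z r) m).card : ℝ) ≤
      (2 * diam (closure V) / ρ) ^ Module.finrank ℝ E := by
  set D := diam (closure V)
  set Λ := cumRatio lam m
  have hΛ : 0 < Λ := cumRatio_pos hlam m
  have hcyl : ∀ σ ∈ wordsMeeting w p (closure V) (closedBall z r) m,
      ball (compWord w m σ x₀) (Λ * ρ) ⊆ compWord w m σ '' V := fun σ hσ => by
    rw [← image_ball_of_dist_eq hΛ (dist_compWord hsim (mem_wordsMeeting.1 hσ).1)]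
    exact image_mono hball
  have hpack := card_mul_pow_le_of_pairwiseDisjoint_ball Measure.addHaar (mul_pos hΛ hρ)
    (by positivity : 0 ≤ 2 * (Λ * D)) (c := fun σ => compWord w m σ x₀) (z := z)
    (fun σ hσ τ hτ hne => (disjoint_compWord_image
      (fun n i hi => injective_of_dist_eq (hlam n) (hsim n i hi)) hmaps hdisj
      (mem_wordsMeeting.1 hσ).1 (mem_wordsMeeting.1 hτ).1 hne).mono (hcyl σ hσ) (hcyl τ hτ))
    fun σ hσ q hq => by
      obtain ⟨hσw, _, ⟨b, hb, rfl⟩, hbz⟩ := mem_wordsMeeting.1 hσ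
      obtain ⟨a, ha, rfl⟩ := hcyl σ hσ hq
      have hab : dist (compWord w m σ a) (compWord w m σ b) ≤ Λ * D := by
        rw [dist_compWord hsim hσw]
        exact mul_le_mul_of_nonneg_left
          (dist_le_diam_of_mem hV.closure (subset_closure ha) hb) hΛ.le
      rw [mem_closedBall] at hbz ⊢
      linarith [dist_triangle (compWord w m σ a) (compWord w m σ b) z]
  rw [show 2 * (Λ * D) = Λ * (2 * D) by ring, mul_pow, mul_pow, mul_left_comm] at hpack
  rw [div_pow, le_div_iff₀ (pow_pos hρ _)]
  exact le_of_mul_le_mul_left hpack (pow_pos hΛ _)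

lemma naturalMeasure_closedBall_le
    (hsim : ∀ n i, i < p n → ∀ a b, dist (w n i a) (w n i b) = lam n * dist a b)
    (hlam : ∀ n, 0 < lam n) (hc1 : c < 1) (hc : ∀ n, lam n ≤ c)
    (hmaps : ∀ n i, i < p n → w n i '' V ⊆ V)
    (hdisj : ∀ n i j, i < p n → j < p n → i ≠ j → Disjoint (w n i '' V) (w n j '' V))
    (hV : Bornology.IsBounded V) (hρ : 0 < ρ) (hball : ball x₀ ρ ⊆ V)
    (hp : ∀ n, 0 < p n) {pm : ℕ} (hpm : ∀ n, p n ≤ pm) (hD : 0 < diam (closure V))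
    {d : ℝ} (hd : 0 ≤ d) {n₀ : ℕ}
    (hmass : ∀ n, n₀ ≤ n → 1 ≤ (cumCount p n : ℝ) * cumRatio lam n ^ d)
    (z : E) {r : ℝ} (hr : 0 < r) (hrn₀ : r ≤ cumRatio lam n₀ * diam (closure V)) :
    naturalMeasure w p x₀ (closedBall z r) ≤ ENNReal.ofReal
      ((2 * diam (closure V) / ρ) ^ Module.finrank ℝ E * pm / diam (closure V) ^ d * r ^ d) := by
  set D := diam (closure V)
  obtain ⟨m, hm, hrm, hrm'⟩ := exists_le_and_lt_of_tendsto_zero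
    (by simpa using (tendsto_cumRatio (fun n => (hlam n).le) hc1 hc).mul_const D) hr hrn₀
  have hcard : ((wordsMeeting w p (closure V) (closedBall z r) (m + 1)).card : ℝ) ≤
      (2 * D / ρ) ^ Module.finrank ℝ E * pm :=
    calc _ ≤ ((wordsMeeting w p (closure V) (closedBall z r) m).card : ℝ) * p m := by
          exact_mod_cast card_wordsMeeting_succ_le (mapsTo_closure_of_dist_eq hsim hmaps) _ m
      _ ≤ _ := mul_le_mul
          (card_wordsMeeting_closedBall_le hsim hlam hmaps hdisj hV hρ hball z hrm)
          (Nat.cast_le.2 (hpm m)) (Nat.cast_nonneg _) (by positivity)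
  have hP : (cumCount p (m + 1) : ℝ)⁻¹ ≤ (r / D) ^ d :=
    calc _ ≤ cumRatio lam (m + 1) ^ d :=
          (inv_le_iff_one_le_mul₀' (Nat.cast_pos.2 (cumCount_pos hp _))).2 (hmass _ (by omega))
      _ ≤ (r / D) ^ d :=
          Real.rpow_le_rpow (cumRatio_pos hlam _).le ((le_div_iff₀ hD).2 hrm'.le) hd
  calc naturalMeasure w p x₀ (closedBall z r)
      ≤ (wordsMeeting w p (closure V) (closedBall z r) (m + 1)).card *
          ENNReal.ofReal (cumCount p (m + 1) : ℝ)⁻¹ :=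
        naturalMeasure_le_card_wordsMeeting hsim (fun n => (hlam n).le) hc1 hc
          hV.isCompact_closure (mapsTo_closure_of_dist_eq hsim hmaps)
          (subset_closure (hball (mem_ball_self hρ))) hp isClosed_closedBall.measurableSet (m + 1)
    _ ≤ ENNReal.ofReal ((2 * D / ρ) ^ Module.finrank ℝ E * pm * (r / D) ^ d) := by
        rw [← ENNReal.ofReal_natCast, ← ENNReal.ofReal_mul (Nat.cast_nonneg _)]
        exact ENNReal.ofReal_le_ofReal (mul_le_mul hcard hP (by positivity) (by positivity))
    _ = _ := by rw [Real.div_rpow hr.le hD.le]; ring_nf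

lemma hausdorffMeasure_limitSet_ne_zero [Nontrivial E]
    (hsim : ∀ n i, i < p n → ∀ a b, dist (w n i a) (w n i b) = lam n * dist a b)
    (hlam : ∀ n, 0 < lam n) (hc1 : c < 1) (hc : ∀ n, lam n ≤ c)
    (hmaps : ∀ n i, i < p n → w n i '' V ⊆ V)
    (hdisj : ∀ n i j, i < p n → j < p n → i ≠ j → Disjoint (w n i '' V) (w n j '' V))
    (hV : Bornology.IsBounded V) (hρ : 0 < ρ) (hball : ball x₀ ρ ⊆ V)
    (hp : ∀ n, 0 < p n) {pm : ℕ} (hpm : ∀ n, p n ≤ pm) {d : ℝ} (hd : 0 < d) {n₀ : ℕ}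
    (hmass : ∀ n, n₀ ≤ n → 1 ≤ (cumCount p n : ℝ) * cumRatio lam n ^ d) :
    μH[d] (limitSet w p (closure V)) ≠ 0 := by
  have hD : 0 < diam (closure V) :=
    calc 0 < 2 * ρ := by positivity
      _ = diam (ball x₀ ρ) := (diam_ball_eq x₀ hρ.le).symm
      _ ≤ diam (closure V) := diam_mono (hball.trans subset_closure) hV.closure
  have hpm₀ : (0 : ℝ) < pm := Nat.cast_pos.2 ((hp 0).trans_le (hpm 0))
  have hle := measure_le_mul_hausdorffMeasure (naturalMeasure w p x₀) hd
    (mul_pos (cumRatio_pos hlam n₀) hD) (by positivity)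
    (fun z r hr hrn₀ => naturalMeasure_closedBall_le hsim hlam hc1 hc hmaps hdisj hV hρ hball hp
      hpm hD hd.le hmass z hr hrn₀) (limitSet w p (closure V))
  rw [naturalMeasure_limitSet hsim (fun n => (hlam n).le) hc1 hc hV.isCompact_closure
    (mapsTo_closure_of_dist_eq hsim hmaps) (subset_closure (hball (mem_ball_self hρ))) hp] at hle
  intro h
  simp [h] at hle

end Euclidean

end

end LimitFractal

open LimitFractal Metric in
theorem stmt6_general {N : ℕ} (hN : 0 < N)
    (w : ℕ → ℕ → EuclideanSpace ℝ (Fin N) → EuclideanSpace ℝ (Fin N))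
    (p : ℕ → ℕ) (hp : ∀ n, 2 ≤ p n) (hpbd : ∃ pm, ∀ n, p n ≤ pm)
    (lam : ℕ → ℝ) (hlam : ∀ n, lam n ∈ Set.Ioo (0 : ℝ) 1)
    (hsup : ∃ c : ℝ, c < 1 ∧ ∀ n, lam n ≤ c)
    (hsim : ∀ n i, i < p n → ∀ a b, dist (w n i a) (w n i b) = lam n * dist a b)
    (V : Set (EuclideanSpace ℝ (Fin N)))
    (hVopen : IsOpen V) (hVbdd : Bornology.IsBounded V) (hVne : V.Nonempty)
    (hmaps : ∀ n i, i < p n → w n i '' V ⊆ V)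
    (hdisj : ∀ n i j, i < p n → j < p n → i ≠ j → Disjoint (w n i '' V) (w n j '' V)) :
    dimH (limitSet w p (closure V)) =
      ENNReal.ofReal (liminf (fun n =>
        Real.log (∏ i ∈ Finset.range n, (p i : ℝ)) /
          Real.log (1 / ∏ i ∈ Finset.range n, lam i)) atTop) := by
  obtain ⟨pm, hpm⟩ := hpbd
  obtain ⟨c, hc1, hc⟩ := hsup
  obtain ⟨x₀, hx₀⟩ := hVne
  obtain ⟨ρ, hρ, hball⟩ := isOpen_iff.1 hVopen x₀ hx₀
  have : Nonempty (Fin N) := ⟨⟨0, hN⟩⟩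
  have hp₀ : ∀ n, 0 < p n := fun n => by linarith [hp n]
  have hlam₀ : ∀ n, 0 < lam n := fun n => (hlam n).1
  have hcobdd : IsCoboundedUnder (· ≥ ·) atTop (dimRatio p lam) :=
    (isBoundedUnder_of_eventually_le ((eventually_ne_atTop 0).mono fun _ hn =>
      dimRatio_le hp₀ hpm hlam₀ hc1 hc hn)).isCoboundedUnder_ge
  simp only [← Nat.cast_prod]
  change dimH _ = ENNReal.ofReal (liminf (dimRatio p lam) atTop)
  refine ENNReal.eq_ofReal_of_forall (fun d hd => ?_) fun d hd₀ hd => ?_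
  · refine dimH_limitSet_le hsim (fun n => (hlam₀ n).le) hc1 hc hVbdd.closure
      ((le_liminf_of_le hcobdd (.of_forall (dimRatio_nonneg hlam₀ hc1 hc))).trans hd.le)
      (((frequently_lt_of_liminf_lt hcobdd hd).and_eventually (eventually_ne_atTop 0)).mono
        fun n ⟨h, hn⟩ => (dimRatio_le_iff hp₀ hlam₀ hc1 hc hn d).1 h.le)
  · obtain ⟨n₀, hn₀⟩ := eventually_atTop.1 ((eventually_lt_of_lt_liminf hd
      (isBoundedUnder_of_eventually_ge (.of_forall (dimRatio_nonneg hlam₀ hc1 hc)))).and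
        (eventually_ne_atTop 0))
    have hμ := hausdorffMeasure_limitSet_ne_zero hsim hlam₀ hc1 hc hmaps hdisj hVbdd hρ hball hp₀
      hpm hd₀ fun n hn =>
        (not_le.1 ((dimRatio_le_iff hp₀ hlam₀ hc1 hc (hn₀ n hn).2 d).not.1 (hn₀ n hn).1.not_ge)).le
    rw [← Real.coe_toNNReal d hd₀.le] at hμ
    exact le_dimH_of_hausdorffMeasure_ne_zero hμ

/-- Hausdorff dimension of a translation limit fractal with the open set condition:
`dim_H F = liminf (log P_n)/(log 1/Λ_n)`. -/
theorem stmt6 {N : ℕ} (hN : 0 < N)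
    (w : ℕ → ℕ → EuclideanSpace ℝ (Fin N) → EuclideanSpace ℝ (Fin N))
    (p : ℕ → ℕ) (hp : ∀ n, 2 ≤ p n) (hpbd : ∃ pm, ∀ n, p n ≤ pm)
    (lam : ℕ → ℝ) (hlam : ∀ n, lam n ∈ Set.Ioo (0 : ℝ) 1)
    (hsup : ∃ c : ℝ, c < 1 ∧ ∀ n, lam n ≤ c)
    (hsim : ∀ n i, i < p n → ∀ a b, dist (w n i a) (w n i b) = lam n * dist a b)
    (V : Set (EuclideanSpace ℝ (Fin N)))
    (hVopen : IsOpen V) (hVbdd : Bornology.IsBounded V) (hVne : V.Nonempty)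
    (hmaps : ∀ n i, i < p n → w n i '' V ⊆ V)
    (hdisj : ∀ n i j, i < p n → j < p n → i ≠ j → Disjoint (w n i '' V) (w n j '' V))
    (hVreg : volume V = volume (closure V) ∧ V = interior (closure V)) :
    dimH (limitSet w p (closure V)) =
      ENNReal.ofReal (liminf (fun n =>
        Real.log (∏ i ∈ Finset.range n, (p i : ℝ)) /
          Real.log (1 / ∏ i ∈ Finset.range n, lam i)) atTop) :=
  stmt6_general hN w p hp hpbd lam hlam hsup hsim V hVopen hVbdd hVne hmaps hdisj
end

section
/- Let μ be a locally finite Borel measure on a metric space X and x a point. Then δ̲_μ(x) ≤ d̲_μ(x) ≤ d̄_μ(x) ≤ δ̄_μ(x), where d̲_μ, d̄_μ are the lower/upper local dimensions and δ̲_μ, δ̄_μ the lower/upper tangential dimensions of μ at x. -/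
/-!
Write `g = log ∘ m` with `m r = μ (B(x, r))` and fix a scale `0 < l < 1`. If
`g s - g (l s) ≤ M log (1/l)` for all small `s`, iterating along the geometric sequence `lⁿ t`
and using that `g` is monotone in between gives `g r ≥ M log r + C` for small `r`, so the upper
local dimension is at most `M`. Letting `M` decrease to the inner `limsup` gives
`d̄ ≤ limsup_r (g r - g (l r)) / log (1/l)` for every such `l`, hence `d̄ ≤ δ̄`.
The lower bounds are symmetric.
-/

open Filter MeasureTheory Metric Real Set Topology

section Growth

variable {g : ℝ → ℝ} {t l : ℝ}

lemma mul_mem_Ioc {s : ℝ} (hl0 : 0 < l) (hl1 : l ≤ 1) (hs : s ∈ Ioc 0 t) :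
    l * s ∈ Ioc 0 t :=
  ⟨mul_pos hl0 hs.1, (mul_le_of_le_one_left hs.1.le hl1).trans hs.2⟩

lemma pow_mul_mem_Ioc (ht : 0 < t) (hl0 : 0 < l) (hl1 : l < 1) (n : ℕ) :
    l ^ n * t ∈ Ioc 0 t :=
  mul_mem_Ioc (pow_pos hl0 n) (pow_le_one₀ hl0.le hl1.le) ⟨ht, le_rfl⟩

lemma le_apply_pow_mul_of_sub_le {a : ℝ} (ht : 0 < t) (hl0 : 0 < l) (hl1 : l < 1)
    (hstep : ∀ s ∈ Ioc 0 t, g s - g (l * s) ≤ a) (n : ℕ) :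
    g t - n * a ≤ g (l ^ n * t) := by
  induction n with
  | zero => simp
  | succ n ih =>
    have := hstep _ (pow_mul_mem_Ioc ht hl0 hl1 n)
    rw [pow_succ', mul_assoc]
    push_cast
    linarith

lemma apply_pow_mul_le_of_le_sub {a : ℝ} (ht : 0 < t) (hl0 : 0 < l) (hl1 : l < 1)
    (hstep : ∀ s ∈ Ioc 0 t, a ≤ g s - g (l * s)) (n : ℕ) :
    g (l ^ n * t) ≤ g t - n * a := by
  induction n with
  | zero => simp
  | succ n ih =>
    have := hstep _ (pow_mul_mem_Ioc ht hl0 hl1 n)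
    rw [pow_succ', mul_assoc]
    push_cast
    linarith

lemma exists_nat_pow_mul_near (ht : 0 < t) (hl0 : 0 < l) (hl1 : l < 1) {r : ℝ}
    (hr : r ∈ Ioc 0 t) :
    ∃ n : ℕ, l ^ (n + 1) * t < r ∧ r ≤ l ^ n * t ∧
      log t - (n + 1) * log (1 / l) < log r ∧ log r ≤ log t - n * log (1 / l) := by
  obtain ⟨n, hlt, hle⟩ :=
    exists_nat_pow_near_of_lt_one (div_pos hr.1 ht) ((div_le_one ht).2 hr.2) hl0 hl1
  rw [lt_div_iff₀ ht] at hlt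
  rw [div_le_iff₀ ht] at hle
  have hlog (k : ℕ) : log (l ^ k * t) = log t - k * log (1 / l) := by
    rw [log_mul (by positivity) ht.ne', log_pow, one_div, log_inv]; ring
  refine ⟨n, hlt, hle, ?_, ?_⟩
  · exact_mod_cast hlog (n + 1) ▸ log_lt_log (by positivity) hlt
  · exact hlog n ▸ log_le_log hr.1 hle

lemma exists_mul_log_add_le_of_sub_le {M : ℝ} (ht : 0 < t) (hl0 : 0 < l) (hl1 : l < 1)
    (hg : MonotoneOn g (Ioc 0 t)) (hstep : ∀ s ∈ Ioc 0 t, g s - g (l * s) ≤ M * log (1 / l)) :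
    ∃ C, ∀ r ∈ Ioc 0 t, M * log r + C ≤ g r := by
  have hL : 0 < log (1 / l) := log_pos (one_lt_one_div hl0 hl1)
  have hM : 0 ≤ M := by
    have hlt : l * t ∈ Ioc 0 t := by simpa using pow_mul_mem_Ioc ht hl0 hl1 1
    have := hg hlt ⟨ht, le_rfl⟩ hlt.2
    nlinarith [hstep t ⟨ht, le_rfl⟩]
  refine ⟨g t - M * log t - M * log (1 / l), fun r hr => ?_⟩
  obtain ⟨n, hlt, -, -, hlog⟩ := exists_nat_pow_mul_near ht hl0 hl1 hr
  have hiter := le_apply_pow_mul_of_sub_le ht hl0 hl1 hstep (n + 1)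
  have hmono := hg (pow_mul_mem_Ioc ht hl0 hl1 (n + 1)) hr hlt.le
  push_cast at hiter
  nlinarith [mul_le_mul_of_nonneg_left hlog hM]

lemma exists_le_mul_log_add_of_le_sub {M : ℝ} (hM : 0 ≤ M) (ht : 0 < t) (hl0 : 0 < l)
    (hl1 : l < 1) (hg : MonotoneOn g (Ioc 0 t))
    (hstep : ∀ s ∈ Ioc 0 t, M * log (1 / l) ≤ g s - g (l * s)) :
    ∃ C, ∀ r ∈ Ioc 0 t, g r ≤ M * log r + C := by
  refine ⟨g t - M * log t + M * log (1 / l), fun r hr => ?_⟩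
  obtain ⟨n, -, hle, hlog, -⟩ := exists_nat_pow_mul_near ht hl0 hl1 hr
  have hiter := apply_pow_mul_le_of_le_sub ht hl0 hl1 hstep n
  have hmono := hg hr (pow_mul_mem_Ioc ht hl0 hl1 n) hle
  nlinarith [mul_le_mul_of_nonneg_left hlog.le hM]

end Growth

section Dimension

variable {g : ℝ → ℝ}

lemma tendsto_const_add_div_log (M C : ℝ) :
    Tendsto (fun r => ((M + C / log r : ℝ) : EReal)) (𝓝[>] 0) (𝓝 M) :=
  (continuous_coe_real_ereal.tendsto M).comp <| by
    simpa using tendsto_const_nhds.add (tendsto_const_nhds.div_atBot tendsto_log_nhdsGT_zero)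

lemma limsup_div_log_le {M C : ℝ} (h : ∀ᶠ r in 𝓝[>] 0, M * log r + C ≤ g r) :
    limsup (fun r => ((g r / log r : ℝ) : EReal)) (𝓝[>] 0) ≤ M := by
  calc limsup (fun r => ((g r / log r : ℝ) : EReal)) (𝓝[>] 0)
      ≤ limsup (fun r => ((M + C / log r : ℝ) : EReal)) (𝓝[>] 0) := by
        refine limsup_le_limsup ?_
        filter_upwards [h, Ioo_mem_nhdsGT one_pos] with r hr ⟨hr0, hr1⟩
        have hlog := log_neg hr0 hr1
        rw [EReal.coe_le_coe_iff, div_le_iff_of_neg hlog, add_mul, div_mul_cancel₀ _ hlog.ne]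
        exact hr
    _ = M := (tendsto_const_add_div_log M C).limsup_eq

lemma le_liminf_div_log {M C : ℝ} (h : ∀ᶠ r in 𝓝[>] 0, g r ≤ M * log r + C) :
    M ≤ liminf (fun r => ((g r / log r : ℝ) : EReal)) (𝓝[>] 0) := by
  calc (M : EReal) = liminf (fun r => ((M + C / log r : ℝ) : EReal)) (𝓝[>] 0) :=
        (tendsto_const_add_div_log M C).liminf_eq.symm
    _ ≤ liminf (fun r => ((g r / log r : ℝ) : EReal)) (𝓝[>] 0) := by
        refine liminf_le_liminf ?_
        filter_upwards [h, Ioo_mem_nhdsGT one_pos] with r hr ⟨hr0, hr1⟩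
        have hlog := log_neg hr0 hr1
        rw [EReal.coe_le_coe_iff, le_div_iff_of_neg hlog, add_mul, div_mul_cancel₀ _ hlog.ne]
        exact hr

lemma exists_Ioc_subset_of_eventually {p : ℝ → Prop} {t₀ : ℝ} (ht₀ : 0 < t₀)
    (h : ∀ᶠ r in 𝓝[>] 0, p r) : ∃ t, 0 < t ∧ t ≤ t₀ ∧ ∀ s ∈ Ioc 0 t, p s := by
  obtain ⟨u, hu, hsub⟩ := mem_nhdsGT_iff_exists_Ioc_subset.mp h
  exact ⟨min u t₀, lt_min hu ht₀, min_le_right _ _,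
    fun s hs => hsub ⟨hs.1, hs.2.trans (min_le_left _ _)⟩⟩

variable {t₀ l : ℝ}

lemma limsup_div_log_le_limsup_tangential (ht₀ : 0 < t₀) (hl0 : 0 < l) (hl1 : l < 1)
    (hg : MonotoneOn g (Ioc 0 t₀)) :
    limsup (fun r => ((g r / log r : ℝ) : EReal)) (𝓝[>] 0) ≤
      limsup (fun r => (((g r - g (l * r)) / log (1 / l) : ℝ) : EReal)) (𝓝[>] 0) := by
  have hL : 0 < log (1 / l) := log_pos (one_lt_one_div hl0 hl1)
  refine EReal.le_of_forall_lt_iff_le.mp fun M hM => ?_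
  obtain ⟨t, ht, htt₀, hstep⟩ := exists_Ioc_subset_of_eventually ht₀ <|
    (eventually_lt_of_limsup_lt hM).mono fun r hr =>
      (div_le_iff₀ hL).mp (EReal.coe_lt_coe_iff.mp hr).le
  obtain ⟨C, hC⟩ := exists_mul_log_add_le_of_sub_le ht hl0 hl1
    (hg.mono (Ioc_subset_Ioc_right htt₀)) hstep
  exact limsup_div_log_le (eventually_of_mem (Ioc_mem_nhdsGT ht) hC)

lemma liminf_tangential_le_liminf_div_log (ht₀ : 0 < t₀) (hl0 : 0 < l) (hl1 : l < 1)
    (hg : MonotoneOn g (Ioc 0 t₀)) :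
    liminf (fun r => (((g r - g (l * r)) / log (1 / l) : ℝ) : EReal)) (𝓝[>] 0) ≤
      liminf (fun r => ((g r / log r : ℝ) : EReal)) (𝓝[>] 0) := by
  have hL : 0 < log (1 / l) := log_pos (one_lt_one_div hl0 hl1)
  refine EReal.ge_of_forall_gt_iff_ge.mp fun c hc => ?_
  obtain ⟨t, ht, htt₀, hstep⟩ := exists_Ioc_subset_of_eventually ht₀ <|
    (eventually_lt_of_lt_liminf hc).mono fun r hr =>
      (le_div_iff₀ hL).mp (EReal.coe_lt_coe_iff.mp hr).le
  have hg' := hg.mono (Ioc_subset_Ioc_right htt₀)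
  -- monotonicity makes the tangential quotient nonnegative, so `c` may be replaced by `max c 0`
  have hstep' : ∀ s ∈ Ioc 0 t, max c 0 * log (1 / l) ≤ g s - g (l * s) := by
    intro s hs
    have hmono := hg' (mul_mem_Ioc hl0 hl1.le hs) hs (mul_le_of_le_one_left hs.1.le hl1.le)
    rw [max_mul_of_nonneg _ _ hL.le, zero_mul]
    exact max_le (hstep s hs) (sub_nonneg.mpr hmono)
  obtain ⟨C, hC⟩ := exists_le_mul_log_add_of_le_sub (le_max_right c 0) ht hl0 hl1 hg' hstep'
  exact (EReal.coe_le_coe_iff.mpr (le_max_left c 0)).trans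
    (le_liminf_div_log (eventually_of_mem (Ioc_mem_nhdsGT ht) hC))

end Dimension

lemma exists_monotoneOn_log_comp {m : ℝ → ℝ} {t₀ : ℝ} (ht₀ : 0 < t₀)
    (hm0 : ∀ r ∈ Ioc 0 t₀, 0 ≤ m r) (hm : MonotoneOn m (Ioc 0 t₀)) :
    ∃ t, 0 < t ∧ MonotoneOn (log ∘ m) (Ioc 0 t) ∧
      ∀ r ∈ Ioc 0 t, ∀ s ∈ Ioc 0 t, log (m r / m s) = log (m r) - log (m s) := by
  by_cases hzero : ∃ s ∈ Ioc 0 t₀, m s = 0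
  · -- `m` vanishes near `0`, and then so does `log ∘ m` because `log 0 = 0`
    obtain ⟨s, hs, hms⟩ := hzero
    have hm_eq : ∀ r ∈ Ioc 0 s, m r = 0 := fun r hr =>
      have hr₀ : r ∈ Ioc 0 t₀ := ⟨hr.1, hr.2.trans hs.2⟩
      le_antisymm (hms ▸ hm hr₀ hs hr.2) (hm0 r hr₀)
    refine ⟨s, hs.1, fun a ha b hb _ => ?_, fun r hr r' hr' => ?_⟩
    · simp [hm_eq a ha, hm_eq b hb]
    · simp [hm_eq r hr, hm_eq r' hr']
  · push Not at hzero
    have hpos : ∀ r ∈ Ioc 0 t₀, 0 < m r := fun r hr => (hm0 r hr).lt_of_ne' (hzero r hr)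
    exact ⟨t₀, ht₀, fun a ha b hb hab => log_le_log (hpos a ha) (hm ha hb hab),
      fun r hr s hs => log_div (hpos r hr).ne' (hpos s hs).ne'⟩

theorem stmt9_general {X : Type*} [MetricSpace X] [MeasurableSpace X]
    (μ : Measure X) [IsLocallyFiniteMeasure μ] (x : X) :
    let m : ℝ → ℝ := fun r => (μ (ball x r)).toReal
    let dlow : EReal := liminf (fun r : ℝ => ((Real.log (m r) / Real.log r : ℝ) : EReal))
      (nhdsWithin 0 (Set.Ioi 0))
    let dup : EReal := limsup (fun r : ℝ => ((Real.log (m r) / Real.log r : ℝ) : EReal))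
      (nhdsWithin 0 (Set.Ioi 0))
    let δlow : EReal := liminf (fun l : ℝ =>
      liminf (fun r : ℝ => ((Real.log (m r / m (l * r)) / Real.log (1 / l) : ℝ) : EReal))
        (nhdsWithin 0 (Set.Ioi 0))) (nhdsWithin 0 (Set.Ioi 0))
    let δup : EReal := limsup (fun l : ℝ =>
      limsup (fun r : ℝ => ((Real.log (m r / m (l * r)) / Real.log (1 / l) : ℝ) : EReal))
        (nhdsWithin 0 (Set.Ioi 0))) (nhdsWithin 0 (Set.Ioi 0))
    δlow ≤ dlow ∧ dlow ≤ dup ∧ dup ≤ δup := by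
  intro m dlow dup δlow δup
  obtain ⟨t₀, ht₀, hfin⟩ := (μ.finiteAt_nhds x).exists_mem_basis nhds_basis_ball
  have hm : MonotoneOn m (Ioc 0 t₀) := fun a _ b hb hab =>
    ENNReal.toReal_mono (ne_top_of_le_ne_top hfin.ne (measure_mono (ball_subset_ball hb.2)))
      (measure_mono (ball_subset_ball hab))
  obtain ⟨t, ht, hg, hlog⟩ :=
    exists_monotoneOn_log_comp ht₀ (fun r _ => ENNReal.toReal_nonneg) hm
  have hquot : ∀ l ∈ Ioo (0 : ℝ) 1,
      (fun r => ((log (m r / m (l * r)) / log (1 / l) : ℝ) : EReal)) =ᶠ[𝓝[>] 0]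
        fun r => (((log (m r) - log (m (l * r))) / log (1 / l) : ℝ) : EReal) := by
    intro l hl
    filter_upwards [Ioc_mem_nhdsGT ht] with r hr
    rw [hlog r hr (l * r) (mul_mem_Ioc hl.1 hl.2.le hr)]
  refine ⟨liminf_le_of_frequently_le' (Eventually.frequently ?_), liminf_le_limsup,
    le_limsup_of_frequently_le' (Eventually.frequently ?_)⟩
  all_goals filter_upwards [Ioo_mem_nhdsGT one_pos] with l hl
  · rw [liminf_congr (hquot l hl)]
    exact liminf_tangential_le_liminf_div_log ht hl.1 hl.2 hg
  · rw [limsup_congr (hquot l hl)]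
    exact limsup_div_log_le_limsup_tangential ht hl.1 hl.2 hg

/-- For a locally finite Borel measure `μ` on a metric space and a point `x`,
the tangential and local dimensions satisfy
`δ̲_μ(x) ≤ d̲_μ(x) ≤ d̄_μ(x) ≤ δ̄_μ(x)` (as extended reals). -/
theorem stmt9 {X : Type*} [MetricSpace X] [MeasurableSpace X] [BorelSpace X]
    (μ : Measure X) [IsLocallyFiniteMeasure μ] (x : X) :
    let m : ℝ → ℝ := fun r => (μ (ball x r)).toReal
    let dlow : EReal := liminf (fun r : ℝ => ((Real.log (m r) / Real.log r : ℝ) : EReal))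
      (nhdsWithin 0 (Set.Ioi 0))
    let dup : EReal := limsup (fun r : ℝ => ((Real.log (m r) / Real.log r : ℝ) : EReal))
      (nhdsWithin 0 (Set.Ioi 0))
    let δlow : EReal := liminf (fun l : ℝ =>
      liminf (fun r : ℝ => ((Real.log (m r / m (l * r)) / Real.log (1 / l) : ℝ) : EReal))
        (nhdsWithin 0 (Set.Ioi 0))) (nhdsWithin 0 (Set.Ioi 0))
    let δup : EReal := limsup (fun l : ℝ =>
      limsup (fun r : ℝ => ((Real.log (m r / m (l * r)) / Real.log (1 / l) : ℝ) : EReal))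
        (nhdsWithin 0 (Set.Ioi 0))) (nhdsWithin 0 (Set.Ioi 0))
    δlow ≤ dlow ∧ dlow ≤ dup ∧ dup ≤ δup :=
  stmt9_general μ x
end

section
/- Let D be the Dirac operator of the ancestral-pair spectral triple of a translation fractal F with level-n ratios λ_n and branching numbers p_n, so that the eigenvalues of |D|^{-1} are rΛ_n each with multiplicity 2P_n (Λ_n = ∏_{i≤n}λ_i, P_n = ∏_{i≤n}p_i, P_0 = Λ_0 = 1). Then for α > 0 the trace Tr(|D|^{-α}) = 2r^α ∑_{n≥0} P_n Λ_n^α is finite if α > limsup_n (log P_n)/(log 1/Λ_n) and infinite if α < limsup_n (log P_n)/(log 1/Λ_n). -/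
/-! For `b` strictly between the limsup and `α`, eventually `log P_n / log (1/Λ_n) < b`,
i.e. `P_n Λ_n^b < 1`, so `P_n Λ_n^α ≤ Λ_n^(α-b) ≤ (c^(α-b))^n` is dominated by a geometric
series.
Conversely, if `α < log P_n / log (1/Λ_n)` infinitely often then `P_n Λ_n^α > 1`
infinitely often, so the terms do not tend to zero. -/

open Filter Real

section RatioOfLogs

variable {x y b : ℝ}

lemma log_mul_rpow_eq_sub (hx : 0 < x) (hy : 0 < y) :
    log (x * y ^ b) = log x - b * log (1 / y) := by
  rw [log_mul hx.ne' (rpow_pos_of_pos hy b).ne', log_rpow hy, one_div, log_inv]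
  ring

lemma log_div_log_inv_lt_iff (hx : 0 < x) (hy₀ : 0 < y) (hy₁ : y < 1) :
    log x / log (1 / y) < b ↔ x * y ^ b < 1 := by
  have hℓ : 0 < log (1 / y) := log_pos (one_lt_one_div hy₀ hy₁)
  rw [div_lt_iff₀ hℓ, ← log_neg_iff (by positivity), log_mul_rpow_eq_sub hx hy₀]
  constructor <;> intro h <;> linarith

lemma lt_log_div_log_inv_iff (hx : 0 < x) (hy₀ : 0 < y) (hy₁ : y < 1) :
    b < log x / log (1 / y) ↔ 1 < x * y ^ b := by
  have hℓ : 0 < log (1 / y) := log_pos (one_lt_one_div hy₀ hy₁)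
  rw [lt_div_iff₀ hℓ, ← log_pos_iff (by positivity), log_mul_rpow_eq_sub hx hy₀]
  constructor <;> intro h <;> linarith

end RatioOfLogs

section Series

variable {Λ P : ℕ → ℝ} {c α : ℝ}

lemma eventually_lt_one_of_le_pow (hΛc : ∀ n, Λ n ≤ c ^ n) (hc₀ : 0 ≤ c) (hc₁ : c < 1) :
    ∀ᶠ n in atTop, Λ n < 1 := by
  filter_upwards [eventually_ne_atTop 0] with n hn
  exact (hΛc n).trans_lt (pow_lt_one₀ hc₀ hc₁ hn)

lemma summable_mul_rpow_of_limsup_lt (hΛ : ∀ n, 0 < Λ n) (hΛc : ∀ n, Λ n ≤ c ^ n)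
    (hc₀ : 0 ≤ c) (hc₁ : c < 1) (hP : ∀ n, 0 < P n)
    (hL : limsup (fun n => ((log (P n) / log (1 / Λ n) : ℝ) : EReal)) atTop < α) :
    Summable fun n => P n * Λ n ^ α := by
  obtain ⟨b, hLb, hbα⟩ := EReal.exists_between_coe_real hL
  have hbα : b < α := mod_cast hbα
  have hsmall : ∀ᶠ n in atTop, P n * Λ n ^ b < 1 := by
    filter_upwards [eventually_lt_of_limsup_lt hLb,
      eventually_lt_one_of_le_pow hΛc hc₀ hc₁] with n hn hn₁
    exact (log_div_log_inv_lt_iff (hP n) (hΛ n) hn₁).1 (mod_cast hn)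
  have hq : c ^ (α - b) < 1 := rpow_lt_one hc₀ hc₁ (sub_pos.2 hbα)
  refine Summable.of_norm_bounded_eventually_nat
    (summable_geometric_of_lt_one (rpow_nonneg hc₀ _) hq) ?_
  filter_upwards [hsmall] with n hn
  have hΛn := hΛ n
  calc ‖P n * Λ n ^ α‖ = P n * Λ n ^ b * Λ n ^ (α - b) := by
        rw [norm_of_nonneg (by have := hP n; positivity), mul_assoc, ← rpow_add hΛn,
          add_sub_cancel]
    _ ≤ 1 * (c ^ n) ^ (α - b) :=
        mul_le_mul hn.le (rpow_le_rpow hΛn.le (hΛc n) (sub_pos.2 hbα).le)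
          (by positivity) zero_le_one
    _ = (c ^ (α - b)) ^ n := by
        rw [one_mul, ← rpow_natCast, ← rpow_mul hc₀, mul_comm, rpow_mul hc₀, rpow_natCast]

lemma not_summable_mul_rpow_of_lt_limsup (hΛ : ∀ n, 0 < Λ n)
    (hΛ₁ : ∀ᶠ n in atTop, Λ n < 1) (hP : ∀ n, 0 < P n)
    (hL : (α : EReal) < limsup (fun n => ((log (P n) / log (1 / Λ n) : ℝ) : EReal)) atTop) :
    ¬ Summable fun n => P n * Λ n ^ α := by
  intro hs
  have hlarge : ∃ᶠ n in atTop, 1 < P n * Λ n ^ α :=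
    ((frequently_lt_of_lt_limsup (by isBoundedDefault) hL).and_eventually hΛ₁).mono
      fun n ⟨hn, hn₁⟩ => (lt_log_div_log_inv_iff (hP n) (hΛ n) hn₁).1 (mod_cast hn)
  obtain ⟨n, hn, hn'⟩ :=
    (hlarge.and_eventually (hs.tendsto_atTop_zero.eventually_lt_const one_pos)).exists
  exact hn.not_gt hn'

end Series

theorem stmt10_general (lam : ℕ → ℝ) (hlam : ∀ n, lam n ∈ Set.Ioo (0 : ℝ) 1)
    (hsup : ∃ c : ℝ, c < 1 ∧ ∀ n, lam n ≤ c)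
    (p : ℕ → ℕ) (hp : ∀ n, 2 ≤ p n) (r : ℝ) (hr : 0 < r) (α : ℝ) :
    let Λ : ℕ → ℝ := fun n => ∏ i ∈ Finset.range n, lam i
    let P : ℕ → ℝ := fun n => ∏ i ∈ Finset.range n, (p i : ℝ)
    let L : EReal := limsup
      (fun n => ((Real.log (P n) / Real.log (1 / Λ n) : ℝ) : EReal)) atTop
    ((L < (α : EReal)) → Summable (fun n => 2 * r ^ α * (P n * Λ n ^ α))) ∧
    (((α : EReal) < L) → ¬ Summable (fun n => 2 * r ^ α * (P n * Λ n ^ α))) := by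
  intro Λ P L
  obtain ⟨c, hc₁, hc⟩ := hsup
  have hc₀ : 0 ≤ c := (hlam 0).1.le.trans (hc 0)
  have hΛ : ∀ n, 0 < Λ n := fun n => Finset.prod_pos fun i _ => (hlam i).1
  have hΛc : ∀ n, Λ n ≤ c ^ n := fun n => by
    simpa using Finset.prod_le_prod (s := Finset.range n) (fun i _ => (hlam i).1.le)
      fun i _ => hc i
  have hP : ∀ n, 0 < P n := fun n => Finset.prod_pos fun i _ => by
    have := hp i; positivity
  rw [summable_mul_left_iff (by positivity)]
  exact ⟨summable_mul_rpow_of_limsup_lt hΛ hΛc hc₀ hc₁ hP,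
    not_summable_mul_rpow_of_lt_limsup hΛ (eventually_lt_one_of_le_pow hΛc hc₀ hc₁) hP⟩

/-- For the ancestral-pair spectral triple of a translation fractal, the trace
`Tr(|D|^{-α}) = 2 r^α ∑_n P_n Λ_n^α` is finite when `α > limsup (log P_n)/(log 1/Λ_n)`
and infinite when `α < limsup (log P_n)/(log 1/Λ_n)`. -/
theorem stmt10 (lam : ℕ → ℝ) (hlam : ∀ n, lam n ∈ Set.Ioo (0 : ℝ) 1)
    (hsup : ∃ c : ℝ, c < 1 ∧ ∀ n, lam n ≤ c)
    (p : ℕ → ℕ) (hp : ∀ n, 2 ≤ p n) (r : ℝ) (hr : 0 < r) (α : ℝ) (hα : 0 < α) :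
    let Λ : ℕ → ℝ := fun n => ∏ i ∈ Finset.range n, lam i
    let P : ℕ → ℝ := fun n => ∏ i ∈ Finset.range n, (p i : ℝ)
    let L : EReal := limsup
      (fun n => ((Real.log (P n) / Real.log (1 / Λ n) : ℝ) : EReal)) atTop
    ((L < (α : EReal)) → Summable (fun n => 2 * r ^ α * (P n * Λ n ^ α))) ∧
    (((α : EReal) < L) → ¬ Summable (fun n => 2 * r ^ α * (P n * Λ n ^ α))) :=
  stmt10_general lam hlam hsup p hp r hr α
end

section
/- Let F be a limit fractal and d the Connes metric of the parent-child spectral triple. Then ‖x−y‖ ≤ d(x,y) for all x,y ∈ F; moreover the identity map ι : (F, ‖·‖) → (F, d) is a homeomorphism. -/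
open Filter MeasureTheory Set

/-- A function is admissible for the parent–child Dirac operator `D`
(`‖[D,f]‖ ≤ 1`) iff its difference quotients over all parent–child pairs
`(x_σ, x_{σ·i})` are bounded by `1`. -/
def DiracAdmissible {N : ℕ}
    (w : ℕ → ℕ → EuclideanSpace ℝ (Fin N) → EuclideanSpace ℝ (Fin N))
    (p : ℕ → ℕ) (x₀ : EuclideanSpace ℝ (Fin N))
    (f : EuclideanSpace ℝ (Fin N) → ℝ) : Prop :=
  Continuous f ∧
    ∀ (n : ℕ) (σ : Fin n → ℕ), (∀ k, σ k < p k) → ∀ i < p n,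
      |f (compWord w n σ x₀) - f (compWord w (n + 1) (Fin.snoc σ i) x₀)| ≤
        dist (compWord w n σ x₀) (compWord w (n + 1) (Fin.snoc σ i) x₀)

/-- Connes distance of the parent–child spectral triple:
`d(x,y) = sup {|f x − f y| : ‖[D,f]‖ ≤ 1}`. -/
noncomputable def connesDist {N : ℕ}
    (w : ℕ → ℕ → EuclideanSpace ℝ (Fin N) → EuclideanSpace ℝ (Fin N))
    (p : ℕ → ℕ) (x₀ x y : EuclideanSpace ℝ (Fin N)) : ℝ :=
  sSup {t | ∃ f : EuclideanSpace ℝ (Fin N) → ℝ,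
    DiracAdmissible w p x₀ f ∧ t = |f x - f y|}


/-!
Testing `d` against the 1-Lipschitz function `dist · y` gives `‖x - y‖ ≤ d(x, y)`.
Conversely, an admissible `f` changes by at most `diam C · K ^ j` along the parent–child edge at
level `j`, where `K < 1` bounds the contraction ratios. Summing the geometric series along
addresses and passing to the limit, `f` stays within `diam C · K ^ m / (1 - K)` of its value at
the vertex `x_r` on the subfractal `F_r`, `|r| = m`; hence `d ≤ 2 diam C · K ^ m / (1 - K)` on
`F_r`. The finitely many closed sets `F_r` cover `F`, so a point close enough to `x` shares some
`F_r` with `x`, which gives `d(u_n, x) → 0` whenever `u_n → x`.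
-/

open Metric Topology
open scoped NNReal

section Words

variable {X : Type*} {w : ℕ → ℕ → X → X} {p : ℕ → ℕ} {C : Set X}

theorem finite_setOf_forall_lt (p : ℕ → ℕ) (n : ℕ) :
    {σ : Fin n → ℕ | ∀ k, σ k < p k}.Finite :=
  (Set.Finite.pi fun k : Fin n => finite_Iio (p k)).subset fun _ hσ k _ => hσ k

/-- `w 0 (ω 0) ∘ ⋯ ∘ w (n - 1) (ω (n - 1))`. -/
def compPrefix (w : ℕ → ℕ → X → X) (ω : ℕ → ℕ) (n : ℕ) : X → X :=
  compWord w n fun k => ω k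

theorem compPrefix_succ (ω : ℕ → ℕ) (n : ℕ) :
    compPrefix w ω (n + 1) = compPrefix w ω n ∘ w n (ω n) :=
  rfl

theorem compPrefix_eq_compWord {ω : ℕ → ℕ} {m : ℕ} {r : Fin m → ℕ}
    (h : ∀ k : Fin m, ω k = r k) : compPrefix w ω m = compWord w m r :=
  congrArg (compWord w m) (funext h)

theorem Fin.snoc_restrict (ω : ℕ → ℕ) (n : ℕ) :
    (Fin.snoc (fun k : Fin n => ω k) (ω n) : Fin (n + 1) → ℕ) = fun k : Fin (n + 1) => ω k :=
  Fin.snoc_init_self fun k : Fin (n + 1) => ω k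

theorem antitone_image_compPrefix (hC : ∀ n i, i < p n → MapsTo (w n i) C C) {ω : ℕ → ℕ}
    (hω : ∀ k, ω k < p k) : Antitone fun n => compPrefix w ω n '' C :=
  antitone_nat_of_succ_le fun n => by
    rw [compPrefix_succ, image_comp]
    exact image_mono (hC n _ (hω n)).image_subset

/-- The subfractal `F_r` of points having an address that begins with `r`. Neighbouring cells may
share boundary points, so this can be smaller than the part of the limit set in the cell of `r`. -/
def prefixCell (w : ℕ → ℕ → X → X) (p : ℕ → ℕ) (C : Set X) {m : ℕ} (r : Fin m → ℕ) : Set X :=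
  ⋂ j, ⋃ (ω : ℕ → ℕ) (_ : (∀ k, ω k < p k) ∧ ∀ k : Fin m, ω k = r k), compPrefix w ω j '' C

theorem exists_compPrefix_of_mem_limitSet (hp : ∀ n, 0 < p n) {a : X}
    (ha : a ∈ limitSet w p C) (j : ℕ) :
    ∃ ω : ℕ → ℕ, (∀ k, ω k < p k) ∧ a ∈ compPrefix w ω j '' C := by
  obtain ⟨σ, hσ, haσ⟩ := mem_iUnion₂.1 (mem_iInter.1 ha j)
  refine ⟨fun k => if h : k < j then σ ⟨k, h⟩ else 0, fun k => ?_, ?_⟩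
  · dsimp only
    split_ifs
    exacts [hσ _, hp k]
  · rwa [compPrefix_eq_compWord fun k => dif_pos k.isLt]

theorem exists_mem_prefixCell (hp : ∀ n, 0 < p n) (hC : ∀ n i, i < p n → MapsTo (w n i) C C)
    {a : X} (ha : a ∈ limitSet w p C) (m : ℕ) :
    ∃ r : Fin m → ℕ, (∀ k, r k < p k) ∧ a ∈ prefixCell w p C r := by
  choose ω hω haω using exists_compPrefix_of_mem_limitSet hp ha
  -- pigeonhole: some address of length `m` begins `ω j` for infinitely many `j`
  obtain ⟨r, hr, hfreq⟩ : ∃ r ∈ {r : Fin m → ℕ | ∀ k, r k < p k},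
      ∃ᶠ j in atTop, (fun k : Fin m => ω j k) = r := by
    by_contra! h
    obtain ⟨j, hj⟩ := ((finite_setOf_forall_lt p m).eventually_all.2 h).exists
    exact hj _ (fun k => hω j k) rfl
  refine ⟨r, hr, mem_iInter.2 fun j => ?_⟩
  obtain ⟨j', hjj', hr'⟩ := frequently_atTop.1 hfreq j
  exact mem_iUnion₂.2 ⟨ω j', ⟨hω j', congrFun hr'⟩,
    antitone_image_compPrefix hC (hω j') hjj' (haω j')⟩

end Words

section Contractions

variable {X : Type*} [MetricSpace X] {w : ℕ → ℕ → X → X} {p : ℕ → ℕ} {C : Set X} {K : ℝ≥0}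

theorem lipschitzWith_compWord (hw : ∀ n i, i < p n → LipschitzWith K (w n i)) {n : ℕ}
    {σ : Fin n → ℕ} (hσ : ∀ k, σ k < p k) : LipschitzWith (K ^ n) (compWord w n σ) := by
  induction n with
  | zero => rw [pow_zero]; exact LipschitzWith.id
  | succ n ih =>
    rw [pow_succ]
    exact (ih fun k => hσ k.castSucc).comp (hw n _ (hσ (Fin.last n)))

theorem dist_compWord_le (hw : ∀ n i, i < p n → LipschitzWith K (w n i))
    (hCb : Bornology.IsBounded C) {n : ℕ} {σ : Fin n → ℕ} (hσ : ∀ k, σ k < p k) {a b : X}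
    (ha : a ∈ C) (hb : b ∈ C) :
    dist (compWord w n σ a) (compWord w n σ b) ≤ K ^ n * diam C := by
  simpa using (lipschitzWith_compWord hw hσ).dist_le_mul_of_le (dist_le_diam_of_mem hCb ha hb)

theorem isClosed_prefixCell (hw : ∀ n i, i < p n → LipschitzWith K (w n i)) (hC : IsCompact C)
    {m : ℕ} (r : Fin m → ℕ) : IsClosed (prefixCell w p C r) := by
  refine isClosed_iInter fun j => ?_
  -- only finitely many level-`j` cells occur in the union
  have hcells : (⋃ (ω : ℕ → ℕ) (_ : (∀ k, ω k < p k) ∧ ∀ k : Fin m, ω k = r k),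
      compPrefix w ω j '' C) = ⋃ σ ∈ (fun ω : ℕ → ℕ => fun k : Fin j => ω k) ''
        {ω | (∀ k, ω k < p k) ∧ ∀ k : Fin m, ω k = r k}, compWord w j σ '' C := by
    rw [biUnion_image]
    rfl
  rw [hcells]
  refine ((finite_setOf_forall_lt p j).subset ?_).isClosed_biUnion ?_
  · rintro _ ⟨ω, hω, rfl⟩ k
    exact hω.1 k
  · rintro _ ⟨ω, hω, rfl⟩
    exact (hC.image (lipschitzWith_compWord hw fun k => hω.1 k).continuous).isClosed

theorem eventually_exists_mem_prefixCell (hp : ∀ n, 0 < p n)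
    (hw : ∀ n i, i < p n → LipschitzWith K (w n i)) (hC : IsCompact C)
    (hCw : ∀ n i, i < p n → MapsTo (w n i) C C) {ι : Type*} {l : Filter ι} {u : ι → X} {x : X}
    (hu : Tendsto u l (𝓝 x)) (huF : ∀ n, u n ∈ limitSet w p C) (m : ℕ) :
    ∀ᶠ n in l, ∃ r : Fin m → ℕ, u n ∈ prefixCell w p C r ∧ x ∈ prefixCell w p C r := by
  set S := {r : Fin m → ℕ | (∀ k, r k < p k) ∧ x ∉ prefixCell w p C r}
  have hclosed : IsClosed (⋃ r ∈ S, prefixCell w p C r) :=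
    ((finite_setOf_forall_lt p m).subset fun r hr => hr.1).isClosed_biUnion
      fun r _ => isClosed_prefixCell hw hC r
  have hx : x ∉ ⋃ r ∈ S, prefixCell w p C r := fun hx => by
    obtain ⟨r, hr, hxr⟩ := mem_iUnion₂.1 hx
    exact hr.2 hxr
  filter_upwards [hu (hclosed.isOpen_compl.mem_nhds hx)] with n hn
  obtain ⟨r, hr, hur⟩ := exists_mem_prefixCell hp hCw (huF n) m
  refine ⟨r, hur, ?_⟩
  by_contra hxr
  exact hn (mem_iUnion₂.2 ⟨r, ⟨hr, hxr⟩, hur⟩)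

end Contractions

section Connes

variable {N : ℕ} {w : ℕ → ℕ → EuclideanSpace ℝ (Fin N) → EuclideanSpace ℝ (Fin N)}
  {p : ℕ → ℕ} {C : Set (EuclideanSpace ℝ (Fin N))} {K : ℝ≥0} {x₀ : EuclideanSpace ℝ (Fin N)}
  {f : EuclideanSpace ℝ (Fin N) → ℝ}

theorem LipschitzWith.diracAdmissible (hf : LipschitzWith 1 f) : DiracAdmissible w p x₀ f :=
  ⟨hf.continuous, fun _ _ _ _ _ => by simpa [Real.dist_eq] using hf.dist_le_mul _ _⟩

variable (hw : ∀ n i, i < p n → LipschitzWith K (w n i)) (hK : K < 1)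
  (hCb : Bornology.IsBounded C) (hCw : ∀ n i, i < p n → MapsTo (w n i) C C) (hx₀ : x₀ ∈ C)
include hw hK hCb hCw hx₀

theorem abs_sub_compPrefix_le (hf : DiracAdmissible w p x₀ f) {ω : ℕ → ℕ}
    (hω : ∀ k, ω k < p k) {m j : ℕ} (hmj : m ≤ j) :
    |f (compPrefix w ω m x₀) - f (compPrefix w ω j x₀)| ≤ diam C * K ^ m / (1 - K) := by
  have hedge : ∀ k, dist (f (compPrefix w ω k x₀)) (f (compPrefix w ω (k + 1) x₀)) ≤
      diam C * K ^ k := fun k => by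
    have h := hf.2 k (fun i : Fin k => ω i) (fun i => hω i) (ω k) (hω k)
    rw [Fin.snoc_restrict] at h
    rw [Real.dist_eq, mul_comm]
    exact h.trans (dist_compWord_le hw hCb (fun i => hω i) hx₀ (hCw k _ (hω k) hx₀))
  calc |f (compPrefix w ω m x₀) - f (compPrefix w ω j x₀)|
      = dist (f (compPrefix w ω m x₀)) (f (compPrefix w ω j x₀)) := (Real.dist_eq _ _).symm
    _ ≤ ∑ i ∈ Finset.Ico m j, diam C * K ^ i :=
      dist_le_Ico_sum_of_dist_le (f := fun k => f (compPrefix w ω k x₀)) hmj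
        fun _ _ => hedge _
    _ = diam C * ∑ i ∈ Finset.Ico m j, (K : ℝ) ^ i := (Finset.mul_sum _ _ _).symm
    _ ≤ diam C * (K ^ m / (1 - K)) :=
      mul_le_mul_of_nonneg_left (geom_sum_Ico_le_of_lt_one K.2 hK) diam_nonneg
    _ = diam C * K ^ m / (1 - K) := (mul_div_assoc _ _ _).symm

theorem abs_sub_le_of_mem_prefixCell (hf : DiracAdmissible w p x₀ f) {m : ℕ} {r : Fin m → ℕ}
    {a : EuclideanSpace ℝ (Fin N)} (ha : a ∈ prefixCell w p C r) :
    |f a - f (compWord w m r x₀)| ≤ diam C * K ^ m / (1 - K) := by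
  choose ω hω haω using fun j => mem_iUnion₂.1 (mem_iInter.1 ha j)
  have hv : Tendsto (fun j => compPrefix w (ω j) j x₀) atTop (𝓝 a) := by
    rw [tendsto_iff_dist_tendsto_zero]
    refine squeeze_zero (fun _ => dist_nonneg) (fun j => ?_)
      (by simpa using (tendsto_pow_atTop_nhds_zero_of_lt_one K.2 hK).mul_const (diam C))
    obtain ⟨b, hb, rfl⟩ := haω j
    exact dist_compWord_le hw hCb (fun k => (hω j).1 k) hx₀ hb
  refine le_of_tendsto (((hf.1.tendsto a).comp hv).sub_const _).abs
    (eventually_atTop.2 ⟨m, fun j hj => ?_⟩)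
  rw [Function.comp_apply, ← compPrefix_eq_compWord (hω j).2, abs_sub_comm]
  exact abs_sub_compPrefix_le hw hK hCb hCw hx₀ hf (hω j).1 hj

theorem abs_sub_le_two_mul_of_mem_prefixCell (hf : DiracAdmissible w p x₀ f) {m : ℕ}
    {r : Fin m → ℕ} {x y : EuclideanSpace ℝ (Fin N)} (hx : x ∈ prefixCell w p C r)
    (hy : y ∈ prefixCell w p C r) :
    |f x - f y| ≤ 2 * (diam C * K ^ m / (1 - K)) := by
  calc |f x - f y| ≤ |f x - f (compWord w m r x₀)| + |f y - f (compWord w m r x₀)| := by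
        rw [abs_sub_comm (f y)]; exact abs_sub_le _ _ _
    _ ≤ 2 * (diam C * K ^ m / (1 - K)) := by
        linarith [abs_sub_le_of_mem_prefixCell hw hK hCb hCw hx₀ hf hx,
          abs_sub_le_of_mem_prefixCell hw hK hCb hCw hx₀ hf hy]

theorem connesDist_le_of_mem_prefixCell {m : ℕ} {r : Fin m → ℕ} {x y : EuclideanSpace ℝ (Fin N)}
    (hx : x ∈ prefixCell w p C r) (hy : y ∈ prefixCell w p C r) :
    connesDist w p x₀ x y ≤ 2 * (diam C * K ^ m / (1 - K)) := by
  refine csSup_le ⟨_, _, ((LipschitzWith.const 0).weaken zero_le_one).diracAdmissible, rfl⟩ ?_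
  rintro _ ⟨f, hf, rfl⟩
  exact abs_sub_le_two_mul_of_mem_prefixCell hw hK hCb hCw hx₀ hf hx hy

theorem dist_le_connesDist_of_mem_prefixCell {m : ℕ} {r : Fin m → ℕ}
    {x y : EuclideanSpace ℝ (Fin N)} (hx : x ∈ prefixCell w p C r)
    (hy : y ∈ prefixCell w p C r) :
    dist x y ≤ connesDist w p x₀ x y := by
  refine le_csSup ⟨2 * (diam C * K ^ m / (1 - K)), ?_⟩
    ⟨_, (LipschitzWith.dist_left y).diracAdmissible, by simp⟩
  rintro _ ⟨f, hf, rfl⟩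
  exact abs_sub_le_two_mul_of_mem_prefixCell hw hK hCb hCw hx₀ hf hx hy

end Connes

theorem tendsto_connesDist_of_tendsto {N : ℕ}
    {w : ℕ → ℕ → EuclideanSpace ℝ (Fin N) → EuclideanSpace ℝ (Fin N)} {p : ℕ → ℕ}
    {C : Set (EuclideanSpace ℝ (Fin N))} {K : ℝ≥0} {x₀ : EuclideanSpace ℝ (Fin N)}
    (hp : ∀ n, 0 < p n)
    (hw : ∀ n i, i < p n → LipschitzWith K (w n i)) (hK : K < 1) (hC : IsCompact C)
    (hCw : ∀ n i, i < p n → MapsTo (w n i) C C) (hx₀ : x₀ ∈ C) {ι : Type*} {l : Filter ι}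
    {u : ι → EuclideanSpace ℝ (Fin N)} {x : EuclideanSpace ℝ (Fin N)}
    (hu : Tendsto u l (𝓝 x)) (huF : ∀ n, u n ∈ limitSet w p C) :
    Tendsto (fun n => connesDist w p x₀ (u n) x) l (𝓝 0) := by
  have hcommon := eventually_exists_mem_prefixCell hp hw hC hCw hu huF
  have hbound : Tendsto (fun m : ℕ => 2 * (diam C * K ^ m / (1 - K))) atTop (𝓝 0) := by
    simpa using (((tendsto_pow_atTop_nhds_zero_of_lt_one K.2 hK).const_mul (diam C)).div_const
      (1 - (K : ℝ))).const_mul 2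
  refine tendsto_order.2 ⟨fun ε hε => ?_, fun ε hε => ?_⟩
  · filter_upwards [hcommon 0] with n ⟨r, hur, hxr⟩
    exact hε.trans_le (dist_nonneg.trans
      (dist_le_connesDist_of_mem_prefixCell hw hK hC.isBounded hCw hx₀ hur hxr))
  · obtain ⟨m, hm⟩ := (hbound.eventually (gt_mem_nhds hε)).exists
    filter_upwards [hcommon m] with n ⟨r, hur, hxr⟩
    exact (connesDist_le_of_mem_prefixCell hw hK hC.isBounded hCw hx₀ hur hxr).trans_lt hm

theorem stmt16_general {N : ℕ}
    (w : ℕ → ℕ → EuclideanSpace ℝ (Fin N) → EuclideanSpace ℝ (Fin N))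
    (p : ℕ → ℕ) (hp : ∀ n, 1 ≤ p n)
    (lam : ℕ → ℕ → ℝ)
    (hsup : ∃ c : ℝ, c < 1 ∧ ∀ n i, i < p n → lam n i ≤ c)
    (hsim : ∀ n i, i < p n → ∀ a b, dist (w n i a) (w n i b) = lam n i * dist a b)
    (V : Set (EuclideanSpace ℝ (Fin N)))
    (hVbdd : Bornology.IsBounded V)
    (hmaps : ∀ n i, i < p n → w n i '' V ⊆ V)
    (x₀ : EuclideanSpace ℝ (Fin N)) (hx₀ : x₀ ∈ V) :
    (∀ x ∈ limitSet w p (closure V), ∀ y ∈ limitSet w p (closure V),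
      dist x y ≤ connesDist w p x₀ x y) ∧
    (∀ x ∈ limitSet w p (closure V), ∀ u : ℕ → EuclideanSpace ℝ (Fin N),
      (∀ n, u n ∈ limitSet w p (closure V)) →
      (Tendsto (fun n => dist (u n) x) atTop (nhds 0) ↔
        Tendsto (fun n => connesDist w p x₀ (u n) x) atTop (nhds 0))) := by
  obtain ⟨c, hc1, hc⟩ := hsup
  have hw : ∀ n i, i < p n → LipschitzWith c.toNNReal (w n i) := fun n i hi =>
    LipschitzWith.of_dist_le_mul fun a b => by
      rw [hsim n i hi]
      exact mul_le_mul_of_nonneg_right ((hc n i hi).trans c.le_coe_toNNReal) dist_nonneg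
  have hK : c.toNNReal < 1 := Real.toNNReal_lt_one.2 hc1
  have hC : IsCompact (closure V) := hVbdd.isCompact_closure
  have hCw : ∀ n i, i < p n → MapsTo (w n i) (closure V) (closure V) := fun n i hi =>
    (mapsTo_iff_image_subset.2 (hmaps n i hi)).closure (hw n i hi).continuous
  have hdist : ∀ x ∈ limitSet w p (closure V), ∀ y ∈ limitSet w p (closure V),
      dist x y ≤ connesDist w p x₀ x y := fun x hx y hy => by
    obtain ⟨r, -, hxr⟩ := exists_mem_prefixCell hp hCw hx 0
    obtain ⟨r', -, hyr⟩ := exists_mem_prefixCell hp hCw hy 0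
    rw [Subsingleton.elim r' r] at hyr
    exact dist_le_connesDist_of_mem_prefixCell hw hK hC.isBounded hCw (subset_closure hx₀) hxr hyr
  refine ⟨hdist, fun x hx u hu => ⟨fun hux => ?_, fun hux => ?_⟩⟩
  · exact tendsto_connesDist_of_tendsto hp hw hK hC hCw (subset_closure hx₀)
      (tendsto_iff_dist_tendsto_zero.2 hux) hu
  · exact squeeze_zero (fun _ => dist_nonneg) (fun n => hdist _ (hu n) x hx) hux

/-- On a limit fractal the Connes metric `d` of the parent–child triple dominates
the Euclidean distance, and the identity `(F, ‖·‖) → (F, d)` is a homeomorphism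
(stated via sequential convergence). -/
theorem stmt16 {N : ℕ} (hN : 0 < N)
    (w : ℕ → ℕ → EuclideanSpace ℝ (Fin N) → EuclideanSpace ℝ (Fin N))
    (p : ℕ → ℕ) (hp : ∀ n, 1 ≤ p n)
    (lam : ℕ → ℕ → ℝ) (hlam : ∀ n i, i < p n → lam n i ∈ Set.Ioo (0 : ℝ) 1)
    (hsup : ∃ c : ℝ, c < 1 ∧ ∀ n i, i < p n → lam n i ≤ c)
    (hsim : ∀ n i, i < p n → ∀ a b, dist (w n i a) (w n i b) = lam n i * dist a b)
    (V : Set (EuclideanSpace ℝ (Fin N)))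
    (hVopen : IsOpen V) (hVbdd : Bornology.IsBounded V) (hVne : V.Nonempty)
    (hmaps : ∀ n i, i < p n → w n i '' V ⊆ V)
    (hdisj : ∀ n i j, i < p n → j < p n → i ≠ j → Disjoint (w n i '' V) (w n j '' V))
    (x₀ : EuclideanSpace ℝ (Fin N)) (hx₀ : x₀ ∈ V) :
    (∀ x ∈ limitSet w p (closure V), ∀ y ∈ limitSet w p (closure V),
      dist x y ≤ connesDist w p x₀ x y) ∧
    (∀ x ∈ limitSet w p (closure V), ∀ u : ℕ → EuclideanSpace ℝ (Fin N),
      (∀ n, u n ∈ limitSet w p (closure V)) →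
      (Tendsto (fun n => dist (u n) x) atTop (nhds 0) ↔
        Tendsto (fun n => connesDist w p x₀ (u n) x) atTop (nhds 0))) :=
  stmt16_general w p hp lam hsup hsim V hVbdd hmaps x₀ hx₀
end

section
/- Let F be a limit fractal with inf_{n,i} λ_{ni} = λ̲ > 0 and sup λ_{ni} = λ̄ < 1, satisfying the open set condition, and let d_geo be the Euclidean geodesic distance on F (infimum of lengths of rectifiable curves in F joining two points, assumed finite). Then there is a constant c ≥ 1 such that ‖x−y‖ ≤ d(x,y) ≤ c · d_geo(x,y) for all x,y ∈ F, where d is the Connes metric of the parent-child spectral triple. -/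
/-! An admissible `f` changes by at most `dist(x_σ, x_{σi}) ≤ λ_σ diam C` along a parent–child
edge, where `C = closure V`, so telescoping down the tree and continuity of `f` give
`|f z - f x_σ| ≤ λ_σ K` on the cell `F_σ`, with `K = diam C / (1 - λ̄)`. Hence `|f x - f y| ≤ 2K`
on `F`, which settles curves of length `L ≥ 1`. A curve of length `L < 1` stays in the ball
`B(x, L)` and is covered by the cells `F_σ`, `σ ∈ Σ(L)`, that it meets; walking from `x` to `y`
through pairwise intersecting cells changes `f` by at most `2LK` per step. The number of steps is
bounded independently of `L` by a volume count: the balls `w_σ(B(x₀, r)) ⊆ w_σ(V)` are pairwise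
disjoint by the open set condition, have radius `≥ λ̲ L r` and lie in a ball of radius `≈ L`.
The lower bound comes from the admissible function `dist(·, y)`. -/

open Filter MeasureTheory Set

open Topology

section Similitude

variable {X Y : Type*}

lemma continuous_of_dist_eq_mul [PseudoMetricSpace X] [PseudoMetricSpace Y] {f : X → Y} {r : ℝ}
    (h : ∀ a b, dist (f a) (f b) = r * dist a b) : Continuous f :=
  (LipschitzWith.of_dist_le_mul fun a b => by
    rw [h, Real.coe_toNNReal']
    gcongr
    exact le_max_left _ _).continuous

lemma injective_of_dist_eq_mul [MetricSpace X] [MetricSpace Y] {f : X → Y} {r : ℝ}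
    (hr : r ≠ 0) (h : ∀ a b, dist (f a) (f b) = r * dist a b) : Function.Injective f := by
  intro a b hab
  have hab' := h a b
  rw [hab, dist_self, eq_comm, mul_eq_zero] at hab'
  exact dist_eq_zero.1 (hab'.resolve_left hr)

variable {E : Type*} [NormedAddCommGroup E] [NormedSpace ℝ E] [StrictConvexSpace ℝ E]
  [FiniteDimensional ℝ E]

/-- `r⁻¹ • f` is an isometry of a strictly convex space, hence affine, and its linear part is
injective, hence surjective in finite dimension. -/
lemma surjective_of_dist_eq_mul {f : E → E} {r : ℝ} (hr : 0 < r)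
    (h : ∀ a b, dist (f a) (f b) = r * dist a b) : Function.Surjective f := by
  have hg : Isometry fun a => r⁻¹ • f a := Isometry.of_dist_eq fun a b => by
    rw [dist_smul₀, h, Real.norm_eq_abs, abs_of_pos (inv_pos.2 hr), inv_mul_cancel_left₀ hr.ne']
  set A := hg.affineIsometryOfStrictConvexSpace
  have hA : Function.Surjective A.toAffineMap := A.toAffineMap.linear_surjective_iff.1
    (LinearMap.injective_iff_surjective.1 A.linearIsometry.injective)
  intro y
  obtain ⟨a, ha⟩ := hA (r⁻¹ • y)
  exact ⟨a, smul_right_injective E (inv_ne_zero hr.ne') ha⟩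

lemma image_closedBall_of_dist_eq_mul {f : E → E} {r : ℝ} (hr : 0 < r)
    (h : ∀ a b, dist (f a) (f b) = r * dist a b) (a : E) (s : ℝ) :
    f '' Metric.closedBall a s = Metric.closedBall (f a) (r * s) := by
  ext y
  constructor
  · rintro ⟨b, hb, rfl⟩
    rw [Metric.mem_closedBall] at hb ⊢
    rw [h]
    exact mul_le_mul_of_nonneg_left hb hr.le
  · intro hy
    obtain ⟨b, rfl⟩ := surjective_of_dist_eq_mul hr h y
    rw [Metric.mem_closedBall, h] at hy
    exact ⟨b, Metric.mem_closedBall.2 (le_of_mul_le_mul_left hy hr), rfl⟩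

end Similitude

lemma SimpleGraph.Walk.abs_sub_le_length_mul {V : Type*} {G : SimpleGraph V} {g : V → ℝ}
    {step : ℝ} (hstep : ∀ a b, G.Adj a b → |g a - g b| ≤ step) {a b : V} (W : G.Walk a b) :
    |g a - g b| ≤ W.length * step := by
  induction W with
  | nil => simp
  | @cons u v t hadj W ih =>
      calc |g u - g t| ≤ |g u - g v| + |g v - g t| := abs_sub_le _ _ _
        _ ≤ step + W.length * step := add_le_add (hstep u v hadj) ih
        _ = (SimpleGraph.Walk.cons hadj W).length * step := by
            rw [SimpleGraph.Walk.length_cons]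
            push_cast
            ring

section IntersectionGraph

variable {X ι : Type*}

def intersectionGraph (S : Finset ι) (F : ι → Set X) : SimpleGraph S where
  Adj a b := a ≠ b ∧ (F a ∩ F b).Nonempty
  symm := ⟨fun _ _ ⟨hne, q, hqa, hqb⟩ => ⟨hne.symm, q, hqb, hqa⟩⟩
  loopless := ⟨fun _ h => h.1 rfl⟩

variable [TopologicalSpace X] {S : Finset ι} {F : ι → Set X} {K : Set X}

/-- The pieces reachable from `a` and the remaining ones cover `K` by two closed sets that can
only meet along an edge. -/
lemma intersectionGraph_reachable_of_isPreconnected (hclosed : ∀ a ∈ S, IsClosed (F a))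
    (hK : IsPreconnected K) (hcover : K ⊆ ⋃ a ∈ S, F a) {a b : S} (haK : (F a ∩ K).Nonempty)
    (hbK : (F b ∩ K).Nonempty) : (intersectionGraph S F).Reachable a b := by
  by_contra hab
  set R : Set S := {c | (intersectionGraph S F).Reachable a c}
  have hclosed' : ∀ T : Set S, IsClosed (⋃ c ∈ T, F c) := fun T =>
    T.toFinite.isClosed_biUnion fun c _ => hclosed c c.2
  have hsplit : K ⊆ (⋃ c ∈ R, F c) ∪ ⋃ c ∈ Rᶜ, F c := by
    intro q hq
    obtain ⟨c, hc, hqc⟩ := Set.mem_iUnion₂.1 (hcover hq)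
    by_cases hr : (⟨c, hc⟩ : S) ∈ R
    · exact Or.inl (Set.mem_biUnion hr hqc)
    · exact Or.inr (Set.mem_biUnion hr hqc)
  obtain ⟨q, -, hq₁, hq₂⟩ := isPreconnected_closed_iff.1 hK _ _ (hclosed' R) (hclosed' Rᶜ)
    hsplit (haK.elim fun q hq => ⟨q, hq.2, Set.mem_biUnion (SimpleGraph.Reachable.refl _) hq.1⟩)
    (hbK.elim fun q hq => ⟨q, hq.2, Set.mem_biUnion hab hq.1⟩)
  obtain ⟨c₁, hc₁, hqc₁⟩ := Set.mem_iUnion₂.1 hq₁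
  obtain ⟨c₂, hc₂, hqc₂⟩ := Set.mem_iUnion₂.1 hq₂
  rcases eq_or_ne c₁ c₂ with rfl | hne
  · exact hc₂ hc₁
  · exact hc₂ (hc₁.trans (SimpleGraph.Adj.reachable ⟨hne, q, hqc₁, hqc₂⟩))

lemma abs_sub_le_card_mul_of_isPreconnected (g : ι → ℝ) {step : ℝ} (hstep₀ : 0 ≤ step)
    (hclosed : ∀ a ∈ S, IsClosed (F a))
    (hstep : ∀ a ∈ S, ∀ b ∈ S, (F a ∩ F b).Nonempty → |g a - g b| ≤ step)
    (hK : IsPreconnected K) (hcover : K ⊆ ⋃ a ∈ S, F a) {a b : ι} (ha : a ∈ S)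
    (hb : b ∈ S) (haK : (F a ∩ K).Nonempty) (hbK : (F b ∩ K).Nonempty) :
    |g a - g b| ≤ S.card * step := by
  classical
  obtain ⟨W⟩ := intersectionGraph_reachable_of_isPreconnected hclosed hK hcover
    (a := ⟨a, ha⟩) (b := ⟨b, hb⟩) haK hbK
  have hlen : W.bypass.length < S.card := by simpa using W.bypass_isPath.length_lt
  calc |g a - g b| ≤ W.bypass.length * step :=
        W.bypass.abs_sub_le_length_mul (g := fun c : S => g c)
          fun c d (hcd : (intersectionGraph S F).Adj c d) => hstep c c.2 d d.2 hcd.2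
    _ ≤ S.card * step := by gcongr

end IntersectionGraph

lemma card_mul_pow_le_of_pairwiseDisjoint {N : ℕ} {ι : Type*} (S : Finset ι)
    (c : ι → EuclideanSpace ℝ (Fin N)) (r : ι → ℝ) {R ρ : ℝ} (hρ : 0 < ρ)
    (hR : 0 ≤ R) (hr : ∀ a ∈ S, ρ ≤ r a) (x : EuclideanSpace ℝ (Fin N))
    (hsub : ∀ a ∈ S, Metric.closedBall (c a) (r a) ⊆ Metric.closedBall x R)
    (hdisj : (S : Set ι).PairwiseDisjoint fun a => Metric.closedBall (c a) (r a)) :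
    (S.card : ℝ) * ρ ^ N ≤ R ^ N := by
  set B := volume (Metric.ball (0 : EuclideanSpace ℝ (Fin N)) 1)
  have hB₀ : B ≠ 0 := (Metric.measure_ball_pos volume _ one_pos).ne'
  have hB : B ≠ ⊤ := measure_ball_lt_top.ne
  have hvol : ∀ a ∈ S,
      ENNReal.ofReal (ρ ^ N) * B ≤ volume (Metric.closedBall (c a) (r a)) := by
    intro a ha
    rw [Measure.addHaar_closedBall volume (c a) (hρ.le.trans (hr a ha)),
      finrank_euclideanSpace_fin]
    gcongr
    exact hr a ha
  have hsum : (S.card : ENNReal) * (ENNReal.ofReal (ρ ^ N) * B) ≤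
      ENNReal.ofReal (R ^ N) * B := by
    calc (S.card : ENNReal) * (ENNReal.ofReal (ρ ^ N) * B)
        = ∑ _a ∈ S, ENNReal.ofReal (ρ ^ N) * B := by rw [Finset.sum_const, nsmul_eq_mul]
      _ ≤ ∑ a ∈ S, volume (Metric.closedBall (c a) (r a)) := Finset.sum_le_sum hvol
      _ = volume (⋃ a ∈ S, Metric.closedBall (c a) (r a)) :=
          (measure_biUnion_finset hdisj fun a _ => measurableSet_closedBall).symm
      _ ≤ volume (Metric.closedBall x R) := measure_mono (Set.iUnion₂_subset hsub)
      _ = ENNReal.ofReal (R ^ N) * B := by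
          rw [Measure.addHaar_closedBall volume x hR, finrank_euclideanSpace_fin]
  rw [← mul_assoc, ENNReal.mul_le_mul_iff_left hB₀ hB, ← ENNReal.ofReal_natCast,
    ← ENNReal.ofReal_mul (Nat.cast_nonneg _)] at hsum
  exact (ENNReal.ofReal_le_ofReal_iff (pow_nonneg hR N)).1 hsum

section ConnesDistance

variable {N : ℕ} {w : ℕ → ℕ → EuclideanSpace ℝ (Fin N) → EuclideanSpace ℝ (Fin N)}
  {p : ℕ → ℕ} {x₀ x y : EuclideanSpace ℝ (Fin N)} {b : ℝ}

lemma dist_le_connesDist (hb : ∀ f, DiracAdmissible w p x₀ f → |f x - f y| ≤ b) :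
    dist x y ≤ connesDist w p x₀ x y := by
  refine le_csSup ⟨b, fun _ ⟨f, hf, ht⟩ => ht ▸ hb f hf⟩ ⟨fun z => dist z y,
    ⟨continuous_id.dist continuous_const, fun _ _ _ _ _ => abs_dist_sub_le _ _ _⟩, ?_⟩
  simp

lemma connesDist_le (hb : ∀ f, DiracAdmissible w p x₀ f → |f x - f y| ≤ b)
    (hb₀ : 0 ≤ b) :
    connesDist w p x₀ x y ≤ b :=
  Real.sSup_le (fun _ ⟨f, hf, ht⟩ => ht ▸ hb f hf) hb₀

end ConnesDistance

namespace LimitFractal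

/-! Words are lists read from level `m`, the first letter acting last; for `m = 0`,
`wordMap w 0 σ`, `wordRatio lam 0 σ` and `wordMap w 0 σ x₀` are the paper's `w_σ`, `λ_σ`
and `x_σ`. -/

def wordMap {X : Type*} (w : ℕ → ℕ → X → X) : ℕ → List ℕ → X → X
  | _, [], x => x
  | m, i :: l, x => w m i (wordMap w (m + 1) l x)

def IsAdmissibleWord (p : ℕ → ℕ) : ℕ → List ℕ → Prop
  | _, [] => True
  | m, i :: l => i < p m ∧ IsAdmissibleWord p (m + 1) l

def wordRatio (lam : ℕ → ℕ → ℝ) : ℕ → List ℕ → ℝ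
  | _, [] => 1
  | m, i :: l => lam m i * wordRatio lam (m + 1) l

section Words

variable {X : Type*} {w : ℕ → ℕ → X → X} {p : ℕ → ℕ} {lam : ℕ → ℕ → ℝ}

@[simp] lemma wordMap_nil (m : ℕ) (x : X) : wordMap w m [] x = x := rfl

@[simp] lemma wordMap_cons (m i : ℕ) (l : List ℕ) (x : X) :
    wordMap w m (i :: l) x = w m i (wordMap w (m + 1) l x) := rfl

@[simp] lemma isAdmissibleWord_nil (m : ℕ) : IsAdmissibleWord p m [] := trivial

@[simp] lemma isAdmissibleWord_cons {m i : ℕ} {l : List ℕ} :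
    IsAdmissibleWord p m (i :: l) ↔ i < p m ∧ IsAdmissibleWord p (m + 1) l := Iff.rfl

@[simp] lemma wordRatio_nil (m : ℕ) : wordRatio lam m [] = 1 := rfl

@[simp] lemma wordRatio_cons (m i : ℕ) (l : List ℕ) :
    wordRatio lam m (i :: l) = lam m i * wordRatio lam (m + 1) l := rfl

lemma wordMap_append (m : ℕ) (l₁ l₂ : List ℕ) (x : X) :
    wordMap w m (l₁ ++ l₂) x = wordMap w m l₁ (wordMap w (m + l₁.length) l₂ x) := by
  induction l₁ generalizing m with
  | nil => simp
  | cons i t ih => simp [ih (m + 1), Nat.add_right_comm, Nat.add_assoc]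

lemma isAdmissibleWord_append {m : ℕ} {l₁ l₂ : List ℕ} :
    IsAdmissibleWord p m (l₁ ++ l₂) ↔
      IsAdmissibleWord p m l₁ ∧ IsAdmissibleWord p (m + l₁.length) l₂ := by
  induction l₁ generalizing m with
  | nil => simp
  | cons i t ih => simp [ih, and_assoc, Nat.add_right_comm, Nat.add_assoc]

lemma wordRatio_append (m : ℕ) (l₁ l₂ : List ℕ) :
    wordRatio lam m (l₁ ++ l₂) =
      wordRatio lam m l₁ * wordRatio lam (m + l₁.length) l₂ := by
  induction l₁ generalizing m with
  | nil => simp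
  | cons i t ih => simp [ih (m + 1), mul_assoc, Nat.add_right_comm, Nat.add_assoc]

lemma IsAdmissibleWord.of_prefix {m : ℕ} {l₁ l₂ : List ℕ} (h : IsAdmissibleWord p m l₂)
    (hpre : l₁ <+: l₂) : IsAdmissibleWord p m l₁ := by
  obtain ⟨t, rfl⟩ := hpre
  exact (isAdmissibleWord_append.1 h).1

lemma isAdmissibleWord_ofFn {m n : ℕ} {σ : Fin n → ℕ} :
    IsAdmissibleWord p m (List.ofFn σ) ↔ ∀ k : Fin n, σ k < p (m + k) := by
  induction n generalizing m with
  | zero => simp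
  | succ n ih =>
      rw [List.ofFn_succ, isAdmissibleWord_cons, ih, Fin.forall_fin_succ]
      simp [Nat.add_right_comm, Nat.add_assoc]

lemma compWord_eq_wordMap (n : ℕ) (σ : Fin n → ℕ) (x : X) :
    compWord w n σ x = wordMap w 0 (List.ofFn σ) x := by
  induction n generalizing x with
  | zero => simp [compWord]
  | succ n ih =>
      rw [compWord, ih, List.ofFn_succ' σ, List.concat_eq_append, wordMap_append]
      simp

lemma wordMap_image_subset {m : ℕ} {l : List ℕ} {C : Set X}
    (hC : ∀ n i, i < p n → w n i '' C ⊆ C)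
    (hl : IsAdmissibleWord p m l) : wordMap w m l '' C ⊆ C := by
  induction l generalizing m with
  | nil => rintro _ ⟨a, ha, rfl⟩; exact ha
  | cons i t ih =>
      rintro _ ⟨a, ha, rfl⟩
      exact hC m i hl.1 ⟨_, ih hl.2 ⟨a, ha, rfl⟩, rfl⟩

end Words

structure IsSimilitudeSystem {X : Type*} [MetricSpace X] (w : ℕ → ℕ → X → X)
    (p : ℕ → ℕ) (lam : ℕ → ℕ → ℝ) (lamLow lamUp : ℝ) : Prop where
  one_le : ∀ n, 1 ≤ p n
  lamLow_pos : 0 < lamLow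
  lamUp_lt_one : lamUp < 1
  ratio_mem : ∀ n i, i < p n → lamLow ≤ lam n i ∧ lam n i ≤ lamUp
  dist_eq : ∀ n i, i < p n → ∀ a b, dist (w n i a) (w n i b) = lam n i * dist a b

section System

variable {X : Type*} [MetricSpace X] {w : ℕ → ℕ → X → X} {p : ℕ → ℕ} {lam : ℕ → ℕ → ℝ}
  {lamLow lamUp : ℝ} {m : ℕ} {l : List ℕ}

lemma dist_wordMap
    (hsim : ∀ n i, i < p n → ∀ a b, dist (w n i a) (w n i b) = lam n i * dist a b)
    (hl : IsAdmissibleWord p m l) (a b : X) :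
    dist (wordMap w m l a) (wordMap w m l b) = wordRatio lam m l * dist a b := by
  induction l generalizing m with
  | nil => simp
  | cons i t ih =>
      rw [wordMap_cons, wordMap_cons, hsim m i hl.1, ih hl.2, wordRatio_cons, mul_assoc]

namespace IsSimilitudeSystem

variable (hS : IsSimilitudeSystem w p lam lamLow lamUp)
include hS

lemma lamUp_pos : 0 < lamUp :=
  have h := hS.ratio_mem 0 0 (hS.one_le 0)
  hS.lamLow_pos.trans_le (h.1.trans h.2)

lemma continuous {n i : ℕ} (hi : i < p n) : Continuous (w n i) :=
  continuous_of_dist_eq_mul (hS.dist_eq n i hi)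

lemma injective {n i : ℕ} (hi : i < p n) : Function.Injective (w n i) :=
  injective_of_dist_eq_mul (hS.lamLow_pos.trans_le (hS.ratio_mem n i hi).1).ne' (hS.dist_eq n i hi)

lemma continuous_wordMap (hl : IsAdmissibleWord p m l) : Continuous (wordMap w m l) := by
  induction l generalizing m with
  | nil => exact continuous_id
  | cons i t ih => exact (hS.continuous hl.1).comp (ih hl.2)

lemma wordRatio_pos (hl : IsAdmissibleWord p m l) : 0 < wordRatio lam m l := by
  induction l generalizing m with
  | nil => simp
  | cons i t ih => exact mul_pos (hS.lamLow_pos.trans_le (hS.ratio_mem m i hl.1).1) (ih hl.2)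

lemma wordRatio_le_pow (hl : IsAdmissibleWord p m l) : wordRatio lam m l ≤ lamUp ^ l.length := by
  induction l generalizing m with
  | nil => simp
  | cons i t ih =>
      rw [wordRatio_cons, List.length_cons, pow_succ']
      exact mul_le_mul (hS.ratio_mem m i hl.1).2 (ih hl.2) (hS.wordRatio_pos hl.2).le
        hS.lamUp_pos.le

lemma wordRatio_le_one (hl : IsAdmissibleWord p m l) : wordRatio lam m l ≤ 1 :=
  (hS.wordRatio_le_pow hl).trans (pow_le_one₀ hS.lamUp_pos.le hS.lamUp_lt_one.le)

lemma wordRatio_le_of_prefix {l' : List ℕ} (hl : IsAdmissibleWord p m l) (hpre : l' <+: l) :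
    wordRatio lam m l ≤ wordRatio lam m l' := by
  obtain ⟨t, rfl⟩ := hpre
  rw [isAdmissibleWord_append] at hl
  rw [wordRatio_append]
  exact mul_le_of_le_one_right (hS.wordRatio_pos hl.1).le (hS.wordRatio_le_one hl.2)

lemma image_closure_subset {V : Set X} (hmaps : ∀ n i, i < p n → w n i '' V ⊆ V) {n i : ℕ}
    (hi : i < p n) : w n i '' closure V ⊆ closure V :=
  (image_closure_subset_closure_image (hS.continuous hi)).trans (closure_mono (hmaps n i hi))

lemma disjoint_wordMap_image {V : Set X} (hmaps : ∀ n i, i < p n → w n i '' V ⊆ V)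
    (hdisj : ∀ n i j, i < p n → j < p n → i ≠ j → Disjoint (w n i '' V) (w n j '' V))
    {l₁ l₂ : List ℕ} (h₁ : IsAdmissibleWord p m l₁) (h₂ : IsAdmissibleWord p m l₂)
    (hn₁ : ¬ l₁ <+: l₂) (hn₂ : ¬ l₂ <+: l₁) :
    Disjoint (wordMap w m l₁ '' V) (wordMap w m l₂ '' V) := by
  induction l₁ generalizing l₂ m with
  | nil => exact absurd List.nil_prefix hn₁
  | cons i t₁ ih =>
      cases l₂ with
      | nil => exact absurd List.nil_prefix hn₂
      | cons j t₂ =>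
          have himage : ∀ k t, wordMap w m (k :: t) '' V = w m k '' (wordMap w (m + 1) t '' V) :=
            fun k t => Set.image_comp (w m k) (wordMap w (m + 1) t) V
          rw [himage, himage]
          by_cases hij : i = j
          · subst hij
            rw [List.cons_prefix_cons] at hn₁ hn₂
            exact (Set.disjoint_image_iff (hS.injective h₁.1)).2
              (ih h₁.2 h₂.2 (fun h => hn₁ ⟨rfl, h⟩) (fun h => hn₂ ⟨rfl, h⟩))
          · exact (hdisj m i j h₁.1 h₂.1 hij).mono
              (Set.image_mono (wordMap_image_subset hmaps h₁.2))
              (Set.image_mono (wordMap_image_subset hmaps h₂.2))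

end IsSimilitudeSystem

end System

section LimitSet

variable {X : Type*} (w : ℕ → ℕ → X → X) (p : ℕ → ℕ) (C : Set X)

def wordSet (m n : ℕ) : Set (List ℕ) := {l | l.length = n ∧ IsAdmissibleWord p m l}

def layer (m n : ℕ) : Set X := ⋃ l ∈ wordSet p m n, wordMap w m l '' C

/-- The limit fractal of the shifted system `n ↦ w (m + n)`. -/
def limitSetFrom (m : ℕ) : Set X := ⋂ n, layer w p C m n

variable {w p C}

lemma wordSet_finite (m n : ℕ) : (wordSet p m n).Finite := by
  classical
  set B := (Finset.range (m + n)).sup p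
  refine (Set.finite_range fun σ : Fin n → Fin B => List.ofFn fun k => (σ k : ℕ)).subset ?_
  rintro l ⟨rfl, hl⟩
  rw [← List.ofFn_get l, isAdmissibleWord_ofFn] at hl
  refine ⟨fun k => ⟨l.get k, (hl k).trans_le (Finset.le_sup (Finset.mem_range.2 ?_))⟩, ?_⟩
  · omega
  · simp

lemma mem_layer {m n : ℕ} {z : X} :
    z ∈ layer w p C m n ↔
      ∃ l, (l.length = n ∧ IsAdmissibleWord p m l) ∧ z ∈ wordMap w m l '' C := by
  simp [layer, wordSet]

@[simp] lemma layer_zero (m : ℕ) : layer w p C m 0 = C := by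
  ext z
  simp [mem_layer, List.length_eq_zero_iff]

lemma limitSetFrom_subset_layer (m n : ℕ) : limitSetFrom w p C m ⊆ layer w p C m n :=
  Set.iInter_subset _ n

lemma limitSetFrom_subset (m : ℕ) : limitSetFrom w p C m ⊆ C := by
  simpa using limitSetFrom_subset_layer (w := w) (p := p) (C := C) m 0

lemma limitSet_eq_limitSetFrom : limitSet w p C = limitSetFrom w p C 0 := by
  refine Set.iInter_congr fun n => ?_
  ext z
  simp only [Set.mem_iUnion, mem_layer]
  constructor
  · rintro ⟨σ, hσ, c, hc, rfl⟩
    exact ⟨List.ofFn σ, ⟨by simp, isAdmissibleWord_ofFn.2 (by simpa using hσ)⟩, c, hc,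
      (compWord_eq_wordMap n σ c).symm⟩
  · rintro ⟨l, ⟨rfl, hl⟩, c, hc, rfl⟩
    rw [← List.ofFn_get l, isAdmissibleWord_ofFn] at hl
    exact ⟨l.get, by simpa using hl, c, hc, by rw [compWord_eq_wordMap, List.ofFn_get]⟩

variable (hC : ∀ n i, i < p n → w n i '' C ⊆ C)
include hC

lemma layer_succ_subset (m n : ℕ) : layer w p C m (n + 1) ⊆ layer w p C m n := by
  intro z hz
  rw [mem_layer] at hz ⊢
  obtain ⟨l, ⟨hlen, hl⟩, c, hc, rfl⟩ := hz
  obtain ⟨t, i, rfl⟩ := List.eq_nil_or_concat l |>.resolve_left (by rintro rfl; simp at hlen)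
  rw [List.concat_eq_append, isAdmissibleWord_append] at hl
  refine ⟨t, ⟨by simpa using hlen, hl.1⟩, w (m + t.length) i c,
    hC _ _ hl.2.1 ⟨c, hc, rfl⟩, ?_⟩
  rw [List.concat_eq_append, wordMap_append]
  rfl

lemma layer_antitone (m : ℕ) : Antitone (layer w p C m) :=
  antitone_nat_of_succ_le (layer_succ_subset hC m)

end LimitSet

section Compact

variable {X : Type*} [MetricSpace X] {w : ℕ → ℕ → X → X} {p : ℕ → ℕ} {lam : ℕ → ℕ → ℝ}
  {lamLow lamUp : ℝ} {C : Set X}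
  (hS : IsSimilitudeSystem w p lam lamLow lamUp)

include hS

lemma isCompact_layer (hCc : IsCompact C) (m n : ℕ) : IsCompact (layer w p C m n) :=
  (wordSet_finite m n).isCompact_biUnion fun _ hl => hCc.image (hS.continuous_wordMap hl.2)

lemma isCompact_limitSetFrom (hCc : IsCompact C) (m : ℕ) : IsCompact (limitSetFrom w p C m) :=
  (isCompact_layer hS hCc m 0).of_isClosed_subset
    (isClosed_iInter fun n => (isCompact_layer hS hCc m n).isClosed) (Set.iInter_subset _ 0)

variable (hC : ∀ n i, i < p n → w n i '' C ⊆ C)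
include hC

/-- Pigeonhole: some first letter `j` occurs for infinitely many depths, and injectivity of
`w m j` makes the corresponding preimages agree. -/
lemma limitSetFrom_eq_iUnion (m : ℕ) :
    limitSetFrom w p C m = ⋃ i ∈ Finset.range (p m), w m i '' limitSetFrom w p C (m + 1) := by
  apply Set.Subset.antisymm
  · intro z hz
    have hstep : ∀ n, ∃ i < p m, z ∈ w m i '' layer w p C (m + 1) n := by
      intro n
      obtain ⟨l, ⟨hlen, hl⟩, c, hc, rfl⟩ :=
        mem_layer.1 (limitSetFrom_subset_layer m (n + 1) hz)
      cases l with
      | nil => simp at hlen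
      | cons i t =>
          exact ⟨i, hl.1, _,
            mem_layer.2 ⟨t, ⟨by simpa using hlen, hl.2⟩, c, hc, rfl⟩, rfl⟩
    choose i hi hzi using hstep
    obtain ⟨⟨j, hj⟩, hinf⟩ :=
      Finite.exists_infinite_fiber fun n => (⟨i n, hi n⟩ : Fin (p m))
    rw [Set.infinite_coe_iff] at hinf
    have hkey : ∀ n, z ∈ w m j '' layer w p C (m + 1) n := by
      intro n
      obtain ⟨n', hn', hnn'⟩ := hinf.exists_gt n
      have hij : i n' = j := congrArg Fin.val (Set.mem_singleton_iff.1 hn')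
      obtain ⟨a, ha, haz⟩ := hzi n'
      exact ⟨a, layer_antitone hC (m + 1) hnn'.le ha, hij ▸ haz⟩
    choose a ha haz using hkey
    have hconst : ∀ n, a n = a 0 := fun n => hS.injective hj (by rw [haz, haz])
    exact Set.mem_biUnion (Finset.mem_range.2 hj)
      ⟨a 0, Set.mem_iInter.2 fun n => hconst n ▸ ha n, haz 0⟩
  · simp only [Set.iUnion_subset_iff, Finset.mem_range]
    rintro i hi _ ⟨a, ha, rfl⟩
    refine Set.mem_iInter.2 fun n => ?_
    cases n with
    | zero => exact (layer_zero m).symm ▸ hC m i hi ⟨a, limitSetFrom_subset (m + 1) ha, rfl⟩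
    | succ n =>
        obtain ⟨t, ⟨hlen, ht⟩, c, hc, rfl⟩ :=
          mem_layer.1 (limitSetFrom_subset_layer (m + 1) n ha)
        exact mem_layer.2 ⟨i :: t, ⟨by simp [hlen], hi, ht⟩, c, hc, rfl⟩

lemma limitSetFrom_eq_biUnion_wordSet (m n : ℕ) :
    limitSetFrom w p C m =
      ⋃ l ∈ wordSet p m n, wordMap w m l '' limitSetFrom w p C (m + n) := by
  induction n generalizing m with
  | zero =>
      ext z
      simp [wordSet, List.length_eq_zero_iff]
  | succ n ih =>
      rw [limitSetFrom_eq_iUnion hS hC m, ih (m + 1), Nat.add_right_comm, Nat.add_assoc]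
      ext z
      simp only [Set.image_iUnion₂, Set.mem_iUnion, Finset.mem_range, exists_prop, wordSet,
        Set.mem_ofPred_eq]
      constructor
      · rintro ⟨i, hi, l, ⟨hlen, hl⟩, _, ⟨a, ha, rfl⟩, rfl⟩
        exact ⟨i :: l, ⟨by simp [hlen], hi, hl⟩, a, ha, rfl⟩
      · rintro ⟨_ | ⟨i, l⟩, ⟨hlen, hl⟩, a, ha, rfl⟩
        · simp at hlen
        · exact ⟨i, hl.1, l, ⟨by simpa using hlen, hl.2⟩, _,
            ⟨a, ha, rfl⟩, rfl⟩

end Compact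

section Stopping

variable {X : Type*} [MetricSpace X] {w : ℕ → ℕ → X → X} {p : ℕ → ℕ} {lam : ℕ → ℕ → ℝ}
  {lamLow lamUp : ℝ} {C : Set X} {ε : ℝ} {l : List ℕ}

/-- The paper's `Σ(ε)`. -/
def stoppedWords (lam : ℕ → ℕ → ℝ) (p : ℕ → ℕ) (ε : ℝ) : Set (List ℕ) :=
  {l | IsAdmissibleWord p 0 l ∧ wordRatio lam 0 l ≤ ε ∧ ε < wordRatio lam 0 l.dropLast}

/-- The paper's `F_σ`. -/
def cell (w : ℕ → ℕ → X → X) (p : ℕ → ℕ) (C : Set X) (l : List ℕ) : Set X :=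
  wordMap w 0 l '' limitSetFrom w p C l.length

lemma ne_nil_of_mem_stoppedWords (hε : ε < 1) (hl : l ∈ stoppedWords lam p ε) : l ≠ [] := by
  rintro rfl
  exact absurd hl.2.1 (by simpa using hε)

lemma exists_prefix_mem_stoppedWords (hε : ε < 1) (hl : IsAdmissibleWord p 0 l)
    (hle : wordRatio lam 0 l ≤ ε) : ∃ s ∈ stoppedWords lam p ε, s <+: l := by
  induction l using List.reverseRecOn with
  | nil => rw [wordRatio_nil] at hle; linarith
  | append_singleton t i ih =>
      by_cases ht : wordRatio lam 0 t ≤ ε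
      · obtain ⟨s, hs, hst⟩ := ih (isAdmissibleWord_append.1 hl).1 ht
        exact ⟨s, hs, hst.trans (List.prefix_append t [i])⟩
      · refine ⟨t ++ [i], ⟨hl, hle, ?_⟩, List.prefix_refl _⟩
        rw [List.dropLast_concat]
        linarith

variable (hS : IsSimilitudeSystem w p lam lamLow lamUp)
include hS

lemma mul_lt_wordRatio_of_mem_stoppedWords (hε : 0 ≤ ε) (hl : l ∈ stoppedWords lam p ε) :
    lamLow * ε < wordRatio lam 0 l := by
  obtain ⟨hadm, hle, hlt⟩ := hl
  obtain rfl | ⟨t, i, rfl⟩ := List.eq_nil_or_concat l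
  · exact absurd hlt (not_lt.2 hle)
  rw [List.concat_eq_append, List.dropLast_concat] at hlt
  rw [List.concat_eq_append, isAdmissibleWord_append] at hadm
  have hi := hS.ratio_mem _ i hadm.2.1
  rw [List.concat_eq_append, wordRatio_append, wordRatio_cons, wordRatio_nil, mul_one,
    mul_comm (wordRatio lam 0 t)]
  exact mul_lt_mul' hi.1 hlt hε (hS.lamLow_pos.trans_le hi.1)

lemma length_le_of_mem_stoppedWords {n : ℕ} (hn : lamUp ^ n ≤ ε) (hε : ε < 1)
    (hl : l ∈ stoppedWords lam p ε) : l.length ≤ n := by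
  obtain ⟨t, i, rfl⟩ :=
    (List.eq_nil_or_concat l).resolve_left (ne_nil_of_mem_stoppedWords hε hl)
  obtain ⟨hadm, -, hlt⟩ := hl
  rw [List.concat_eq_append, List.dropLast_concat] at hlt
  rw [List.concat_eq_append, isAdmissibleWord_append] at hadm
  have hpow : lamUp ^ n < lamUp ^ t.length :=
    hn.trans_lt (hlt.trans_le (hS.wordRatio_le_pow hadm.1))
  have := (pow_lt_pow_iff_right_of_lt_one₀ hS.lamUp_pos hS.lamUp_lt_one).1 hpow
  simp only [List.concat_eq_append, List.length_append, List.length_singleton]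
  omega

lemma stoppedWords_finite (hε₀ : 0 < ε) (hε : ε < 1) : (stoppedWords lam p ε).Finite := by
  obtain ⟨n, hn⟩ := exists_pow_lt_of_lt_one hε₀ hS.lamUp_lt_one
  refine ((Finset.range (n + 1)).finite_toSet.biUnion fun k _ => wordSet_finite (p := p) 0 k).subset
    fun l hl => ?_
  exact Set.mem_biUnion (Finset.mem_range.2 (Nat.lt_succ_of_le
    (length_le_of_mem_stoppedWords hS hn.le hε hl))) ⟨rfl, hl.1⟩

lemma not_prefix_of_mem_stoppedWords {s s' : List ℕ} (hs : s ∈ stoppedWords lam p ε)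
    (hs' : s' ∈ stoppedWords lam p ε) (hne : s ≠ s') : ¬ s <+: s' := by
  intro hpre
  have hpre' : s <+: s'.dropLast := by
    obtain ⟨t, rfl⟩ := hpre
    have ht : t ≠ [] := by rintro rfl; simp at hne
    rw [List.dropLast_append_of_ne_nil ht]
    exact List.prefix_append _ _
  have := hS.wordRatio_le_of_prefix (hs'.1.of_prefix (List.dropLast_prefix s')) hpre'
  linarith [hs.2.1, hs'.2.2]

lemma limitSetFrom_subset_biUnion_cell (hC : ∀ n i, i < p n → w n i '' C ⊆ C)
    (hε₀ : 0 < ε) (hε : ε < 1) :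
    limitSetFrom w p C 0 ⊆ ⋃ l ∈ stoppedWords lam p ε, cell w p C l := by
  obtain ⟨n, hn⟩ := exists_pow_lt_of_lt_one hε₀ hS.lamUp_lt_one
  intro z hz
  rw [limitSetFrom_eq_biUnion_wordSet hS hC 0 n] at hz
  simp only [Set.mem_iUnion] at hz
  obtain ⟨l, ⟨hlen, hl⟩, a, ha, rfl⟩ := hz
  obtain ⟨s, hs, t, rfl⟩ := exists_prefix_mem_stoppedWords hε hl
    ((hS.wordRatio_le_pow hl).trans (hlen ▸ hn.le))
  rw [isAdmissibleWord_append, Nat.zero_add] at hl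
  refine Set.mem_biUnion hs ⟨wordMap w s.length t a, ?_, by rw [wordMap_append, Nat.zero_add]⟩
  rw [limitSetFrom_eq_biUnion_wordSet hS hC s.length t.length]
  refine Set.mem_biUnion ⟨rfl, hl.2⟩ ⟨a, ?_, rfl⟩
  simpa [← hlen] using ha

lemma exists_finset_stoppedWords_cover (hC : ∀ n i, i < p n → w n i '' C ⊆ C)
    (hε₀ : 0 < ε) (hε : ε < 1) {A : Set X} (hAF : A ⊆ limitSetFrom w p C 0) :
    ∃ T : Finset (List ℕ), (∀ l ∈ T, l ∈ stoppedWords lam p ε ∧ (cell w p C l ∩ A).Nonempty) ∧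
      A ⊆ ⋃ l ∈ T, cell w p C l := by
  classical
  refine ⟨(stoppedWords_finite hS hε₀ hε).toFinset.filter fun l => (cell w p C l ∩ A).Nonempty,
    fun l hl => ?_, fun q hq => ?_⟩
  · rw [Finset.mem_filter, Set.Finite.mem_toFinset] at hl
    exact hl
  · obtain ⟨l, hl, hql⟩ := Set.mem_iUnion₂.1
      (limitSetFrom_subset_biUnion_cell hS hC hε₀ hε (hAF hq))
    exact Set.mem_biUnion
      (Finset.mem_filter.2 ⟨(Set.Finite.mem_toFinset _).2 hl, q, hql, hq⟩) hql

end Stopping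

section Telescope

variable {N : ℕ} {w : ℕ → ℕ → EuclideanSpace ℝ (Fin N) → EuclideanSpace ℝ (Fin N)}
  {p : ℕ → ℕ} {lam : ℕ → ℕ → ℝ} {lamLow lamUp : ℝ}
  {C : Set (EuclideanSpace ℝ (Fin N))}
  {x₀ : EuclideanSpace ℝ (Fin N)} {f : EuclideanSpace ℝ (Fin N) → ℝ} {l : List ℕ}

lemma _root_.DiracAdmissible.abs_sub_le_dist_append (hf : DiracAdmissible w p x₀ f)
    (hl : IsAdmissibleWord p 0 l) {i : ℕ} (hi : i < p l.length) :
    |f (wordMap w 0 l x₀) - f (wordMap w 0 (l ++ [i]) x₀)| ≤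
      dist (wordMap w 0 l x₀) (wordMap w 0 (l ++ [i]) x₀) := by
  rw [← List.ofFn_get l, isAdmissibleWord_ofFn] at hl
  have h := hf.2 l.length l.get (by simpa using hl) i hi
  rw [compWord_eq_wordMap, compWord_eq_wordMap, List.ofFn_succ', List.concat_eq_append] at h
  simpa [Fin.snoc_castSucc, Fin.snoc_last, List.ofFn_get] using h

variable (hS : IsSimilitudeSystem w p lam lamLow lamUp) (hCb : Bornology.IsBounded C)
  (hx₀ : x₀ ∈ C) (hwx₀ : ∀ n i, i < p n → w n i x₀ ∈ C)
include hS hCb hx₀ hwx₀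

lemma _root_.DiracAdmissible.abs_sub_wordMap_append_le (hf : DiracAdmissible w p x₀ f)
    (hl : IsAdmissibleWord p 0 l) {t : List ℕ} (ht : IsAdmissibleWord p l.length t) :
    |f (wordMap w 0 l x₀) - f (wordMap w 0 (l ++ t) x₀)| ≤
      wordRatio lam 0 l * Metric.diam C * ∑ k ∈ Finset.range t.length, lamUp ^ k := by
  induction t using List.reverseRecOn with
  | nil => simp
  | append_singleton t i ih =>
      rw [isAdmissibleWord_append] at ht
      have hlt : IsAdmissibleWord p 0 (l ++ t) :=
        isAdmissibleWord_append.2 ⟨hl, by rw [Nat.zero_add]; exact ht.1⟩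
      have hi : i < p (l ++ t).length := by simpa using ht.2.1
      have hedge : dist (wordMap w 0 (l ++ t) x₀) (wordMap w 0 (l ++ t ++ [i]) x₀) ≤
          wordRatio lam 0 l * Metric.diam C * lamUp ^ t.length := by
        rw [wordMap_append _ (l ++ t) [i], dist_wordMap hS.dist_eq hlt, wordRatio_append]
        simp only [Nat.zero_add, wordMap_cons, wordMap_nil]
        have hratio := hS.wordRatio_le_pow (m := l.length) ht.1
        have hdiam := Metric.dist_le_diam_of_mem hCb hx₀ (hwx₀ _ _ hi)
        have hpos := hS.wordRatio_pos hl
        calc wordRatio lam 0 l * wordRatio lam l.length t * dist x₀ (w (l ++ t).length i x₀)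
            ≤ wordRatio lam 0 l * lamUp ^ t.length * Metric.diam C :=
              mul_le_mul (mul_le_mul_of_nonneg_left hratio hpos.le) hdiam dist_nonneg
                (mul_nonneg hpos.le (pow_nonneg hS.lamUp_pos.le _))
          _ = _ := by ring
      calc |f (wordMap w 0 l x₀) - f (wordMap w 0 (l ++ (t ++ [i])) x₀)|
          ≤ |f (wordMap w 0 l x₀) - f (wordMap w 0 (l ++ t) x₀)| +
              |f (wordMap w 0 (l ++ t) x₀) - f (wordMap w 0 (l ++ t ++ [i]) x₀)| := by
            rw [← List.append_assoc]
            exact abs_sub_le _ _ _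
        _ ≤ wordRatio lam 0 l * Metric.diam C * ∑ k ∈ Finset.range t.length, lamUp ^ k +
              wordRatio lam 0 l * Metric.diam C * lamUp ^ t.length :=
            add_le_add (ih ht.1) ((hf.abs_sub_le_dist_append hlt hi).trans hedge)
        _ = _ := by
            rw [List.length_append, List.length_singleton, Finset.sum_range_succ, mul_add]

/-- Points of `F_σ` are limits of vertices `x_{στ}`, so the telescoping bound passes to them by
continuity of `f`. -/
lemma _root_.DiracAdmissible.abs_sub_le_of_mem_cell (hf : DiracAdmissible w p x₀ f)
    (hl : IsAdmissibleWord p 0 l) {z : EuclideanSpace ℝ (Fin N)} (hz : z ∈ cell w p C l) :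
    |f z - f (wordMap w 0 l x₀)| ≤ wordRatio lam 0 l * Metric.diam C / (1 - lamUp) := by
  obtain ⟨a, ha, rfl⟩ := hz
  have hdeep : ∀ n, ∃ t, (t.length = n ∧ IsAdmissibleWord p l.length t) ∧
      a ∈ wordMap w l.length t '' C :=
    fun n => mem_layer.1 (limitSetFrom_subset_layer _ n ha)
  choose t ht c hc hca using hdeep
  have hdist : ∀ n, dist (wordMap w 0 (l ++ t n) x₀) (wordMap w 0 l a) ≤
      lamUp ^ n * Metric.diam C := by
    intro n
    rw [wordMap_append, Nat.zero_add, ← hca n, dist_wordMap hS.dist_eq hl,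
      dist_wordMap hS.dist_eq (ht n).2]
    have hpos := hS.wordRatio_pos (ht n).2
    calc wordRatio lam 0 l * (wordRatio lam l.length (t n) * dist x₀ (c n))
        ≤ 1 * (lamUp ^ (t n).length * Metric.diam C) :=
          mul_le_mul (hS.wordRatio_le_one hl) (mul_le_mul (hS.wordRatio_le_pow (ht n).2)
            (Metric.dist_le_diam_of_mem hCb hx₀ (hc n)) dist_nonneg
            (pow_nonneg hS.lamUp_pos.le _)) (mul_nonneg hpos.le dist_nonneg) zero_le_one
      _ = _ := by rw [one_mul, (ht n).1]
  have hlim : Tendsto (fun n => wordMap w 0 (l ++ t n) x₀) atTop (𝓝 (wordMap w 0 l a)) := by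
    refine tendsto_iff_dist_tendsto_zero.2 (squeeze_zero (fun _ => dist_nonneg) hdist ?_)
    simpa using (tendsto_pow_atTop_nhds_zero_of_lt_one hS.lamUp_pos.le hS.lamUp_lt_one).mul_const
      (Metric.diam C)
  refine le_of_tendsto' (((hf.1.tendsto _).comp hlim).sub_const _).abs fun n => ?_
  rw [Function.comp_apply, abs_sub_comm]
  refine (hf.abs_sub_wordMap_append_le hS hCb hx₀ hwx₀ hl ((ht n).2)).trans ?_
  have hgeom : ∑ k ∈ Finset.range (t n).length, lamUp ^ k ≤ 1 / (1 - lamUp) := by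
    have h := geom_sum_Ico_le_of_lt_one (m := 0) (n := (t n).length) hS.lamUp_pos.le
      hS.lamUp_lt_one
    rwa [← Finset.range_eq_Ico, pow_zero] at h
  rw [div_eq_mul_one_div]
  exact mul_le_mul_of_nonneg_left hgeom
    (mul_nonneg (hS.wordRatio_pos hl).le Metric.diam_nonneg)

lemma _root_.DiracAdmissible.abs_sub_le_of_mem_limitSetFrom (hf : DiracAdmissible w p x₀ f)
    {x y : EuclideanSpace ℝ (Fin N)} (hx : x ∈ limitSetFrom w p C 0)
    (hy : y ∈ limitSetFrom w p C 0) :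
    |f x - f y| ≤ 2 * (Metric.diam C / (1 - lamUp)) := by
  have hcell : ∀ z ∈ limitSetFrom w p C 0, |f z - f x₀| ≤ Metric.diam C / (1 - lamUp) :=
    fun z hz => by
      simpa using hf.abs_sub_le_of_mem_cell hS hCb hx₀ hwx₀ (l := []) trivial ⟨z, hz, rfl⟩
  calc |f x - f y| ≤ |f x - f x₀| + |f x₀ - f y| := abs_sub_le _ _ _
    _ ≤ _ := by linarith [hcell x hx, abs_sub_comm (f x₀) (f y) ▸ hcell y hy]

end Telescope

section OpenSetCondition

variable {N : ℕ} {w : ℕ → ℕ → EuclideanSpace ℝ (Fin N) → EuclideanSpace ℝ (Fin N)}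
  {p : ℕ → ℕ} {lam : ℕ → ℕ → ℝ} {lamLow lamUp : ℝ}
  {V : Set (EuclideanSpace ℝ (Fin N))}
  {x₀ : EuclideanSpace ℝ (Fin N)} {r ε : ℝ}
  (hS : IsSimilitudeSystem w p lam lamLow lamUp)
  (hmaps : ∀ n i, i < p n → w n i '' V ⊆ V)
  (hdisj : ∀ n i j, i < p n → j < p n → i ≠ j → Disjoint (w n i '' V) (w n j '' V))
  (hVb : Bornology.IsBounded V) (hr : 0 < r) (hrV : Metric.closedBall x₀ r ⊆ V)
include hS hmaps hdisj hVb hr hrV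

/-- This volume count replaces the paper's necklace lemma: the balls `w_σ(B(x₀, r)) ⊆ w_σ(V)`
have radius `≥ λ̲ ε r` and are pairwise disjoint by the open set condition. -/
lemma card_le_of_subset_stoppedWords (hε : 0 < ε) (S : Finset (List ℕ))
    (hSε : ∀ l ∈ S, l ∈ stoppedWords lam p ε) {x : EuclideanSpace ℝ (Fin N)}
    (hSx : ∀ l ∈ S, (cell w p (closure V) l ∩ Metric.closedBall x ε).Nonempty) :
    (S.card : ℝ) ≤ ((1 + Metric.diam (closure V) + r) / (lamLow * r)) ^ N := by
  have hx₀ : x₀ ∈ closure V := subset_closure (hrV (Metric.mem_closedBall_self hr.le))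
  have hD := Metric.diam_nonneg (s := closure V)
  have hball : ∀ l ∈ S, Metric.closedBall (wordMap w 0 l x₀) (wordRatio lam 0 l * r) =
      wordMap w 0 l '' Metric.closedBall x₀ r := fun l hl =>
    (image_closedBall_of_dist_eq_mul (hS.wordRatio_pos (hSε l hl).1)
      (dist_wordMap hS.dist_eq (hSε l hl).1) x₀ r).symm
  have hcount := card_mul_pow_le_of_pairwiseDisjoint S (fun l => wordMap w 0 l x₀)
    (fun l => wordRatio lam 0 l * r) (R := (1 + Metric.diam (closure V) + r) * ε)
    (ρ := lamLow * r * ε) (by have := hS.lamLow_pos; positivity) (by positivity)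
    (fun l hl => by
      have := mul_lt_wordRatio_of_mem_stoppedWords hS hε.le (hSε l hl)
      nlinarith) x ?_ ?_
  · have := hS.lamLow_pos
    rw [← mul_div_mul_right _ _ hε.ne', div_pow, le_div_iff₀ (by positivity)]
    exact hcount
  · intro l hl u hu
    obtain ⟨q, ⟨a, ha, rfl⟩, hqx⟩ := hSx l hl
    have hle := (hSε l hl).2.1
    have hcl := dist_wordMap hS.dist_eq (hSε l hl).1 x₀ a
    have ha' := Metric.dist_le_diam_of_mem hVb.closure hx₀ (limitSetFrom_subset _ ha)
    rw [Metric.mem_closedBall] at hu hqx ⊢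
    have := hS.wordRatio_pos (hSε l hl).1
    calc dist u x ≤ dist u (wordMap w 0 l x₀) + dist (wordMap w 0 l x₀) (wordMap w 0 l a) +
          dist (wordMap w 0 l a) x := dist_triangle4 _ _ _ _
      _ ≤ ε * r + ε * Metric.diam (closure V) + ε := by
          gcongr
          · exact hu.trans (by gcongr)
          · rw [hcl]; nlinarith
      _ = _ := by ring
  · intro a ha b hb hab
    simp only [Function.onFun]
    rw [hball a ha, hball b hb]
    exact (hS.disjoint_wordMap_image hmaps hdisj (hSε a ha).1 (hSε b hb).1
      (not_prefix_of_mem_stoppedWords hS (hSε a ha) (hSε b hb) hab)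
      (not_prefix_of_mem_stoppedWords hS (hSε b hb) (hSε a ha) (Ne.symm hab))).mono
      (Set.image_mono hrV) (Set.image_mono hrV)

lemma _root_.DiracAdmissible.abs_sub_le_of_isPreconnected
    {f : EuclideanSpace ℝ (Fin N) → ℝ} (hf : DiracAdmissible w p x₀ f) (hε₀ : 0 < ε)
    (hε₁ : ε < 1) {A : Set (EuclideanSpace ℝ (Fin N))} (hA : IsPreconnected A)
    (hAF : A ⊆ limitSetFrom w p (closure V) 0) {x y : EuclideanSpace ℝ (Fin N)}
    (hAx : A ⊆ Metric.closedBall x ε) (hx : x ∈ A) (hy : y ∈ A) :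
    |f x - f y| ≤ (2 * ((1 + Metric.diam (closure V) + r) / (lamLow * r)) ^ N + 2) *
      (Metric.diam (closure V) / (1 - lamUp)) * ε := by
  set K := Metric.diam (closure V) / (1 - lamUp)
  have hK : 0 ≤ K := div_nonneg Metric.diam_nonneg (by linarith [hS.lamUp_lt_one])
  have hx₀ : x₀ ∈ closure V := subset_closure (hrV (Metric.mem_closedBall_self hr.le))
  have hwx₀ : ∀ n i, i < p n → w n i x₀ ∈ closure V :=
    fun n i hi => hS.image_closure_subset hmaps hi ⟨x₀, hx₀, rfl⟩
  have hCmaps : ∀ n i, i < p n → w n i '' closure V ⊆ closure V :=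
    fun n i hi => hS.image_closure_subset hmaps hi
  obtain ⟨T, hT, hcover⟩ := exists_finset_stoppedWords_cover hS hCmaps hε₀ hε₁ hAF
  have hcell : ∀ l ∈ T, ∀ z ∈ cell w p (closure V) l,
      |f z - f (wordMap w 0 l x₀)| ≤ ε * K :=
    fun l hl z hz => (hf.abs_sub_le_of_mem_cell hS hVb.closure hx₀ hwx₀ (hT l hl).1.1 hz).trans
      (by rw [mul_div_assoc]; exact mul_le_mul_of_nonneg_right (hT l hl).1.2.1 hK)
  obtain ⟨sx, hsx, hxsx⟩ := Set.mem_iUnion₂.1 (hcover hx)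
  obtain ⟨sy, hsy, hysy⟩ := Set.mem_iUnion₂.1 (hcover hy)
  have hchain := abs_sub_le_card_mul_of_isPreconnected (S := T) (F := cell w p (closure V))
    (fun l => f (wordMap w 0 l x₀)) (by positivity : 0 ≤ 2 * (ε * K))
    (fun l hl => ((isCompact_limitSetFrom hS (Metric.isCompact_of_isClosed_isBounded
      isClosed_closure hVb.closure) _).image (hS.continuous_wordMap (hT l hl).1.1)).isClosed)
    (fun a ha b hb ⟨z, hza, hzb⟩ => by
      have hza' := hcell a ha z hza
      rw [abs_sub_comm] at hza'
      linarith [hcell b hb z hzb,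
        abs_sub_le (f (wordMap w 0 a x₀)) (f z) (f (wordMap w 0 b x₀))])
    hA hcover hsx hsy ⟨x, hxsx, hx⟩ ⟨y, hysy, hy⟩
  have hcard := card_le_of_subset_stoppedWords hS hmaps hdisj hVb hr hrV hε₀ T
    (fun l hl => (hT l hl).1) fun l hl => (hT l hl).2.mono (Set.inter_subset_inter_right _ hAx)
  calc |f x - f y|
      ≤ |f x - f (wordMap w 0 sx x₀)| + |f (wordMap w 0 sx x₀) - f (wordMap w 0 sy x₀)| +
          |f y - f (wordMap w 0 sy x₀)| := by
        rw [abs_sub_comm (f y)]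
        linarith [abs_sub_le (f x) (f (wordMap w 0 sx x₀)) (f y),
          abs_sub_le (f (wordMap w 0 sx x₀)) (f (wordMap w 0 sy x₀)) (f y)]
    _ ≤ ε * K + T.card * (2 * (ε * K)) + ε * K :=
        add_le_add (add_le_add (hcell sx hsx x hxsx) hchain) (hcell sy hsy y hysy)
    _ ≤ ε * K + ((1 + Metric.diam (closure V) + r) / (lamLow * r)) ^ N * (2 * (ε * K)) +
          ε * K := by
        gcongr
    _ = _ := by ring

lemma _root_.DiracAdmissible.abs_sub_le_mul_eVariationOn
    {f : EuclideanSpace ℝ (Fin N) → ℝ} (hf : DiracAdmissible w p x₀ f)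
    {γ : ℝ → EuclideanSpace ℝ (Fin N)} (hγ : ContinuousOn γ (Icc 0 1))
    {x y : EuclideanSpace ℝ (Fin N)} (hγ₀ : γ 0 = x) (hγ₁ : γ 1 = y)
    (hγF : MapsTo γ (Icc 0 1) (limitSetFrom w p (closure V) 0))
    (htop : eVariationOn γ (Icc 0 1) ≠ ⊤) :
    |f x - f y| ≤ (1 + (2 * ((1 + Metric.diam (closure V) + r) / (lamLow * r)) ^ N + 2) *
      (Metric.diam (closure V) / (1 - lamUp))) * (eVariationOn γ (Icc 0 1)).toReal := by
  set L := (eVariationOn γ (Icc 0 1)).toReal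
  set m₀ := ((1 + Metric.diam (closure V) + r) / (lamLow * r)) ^ N
  set K := Metric.diam (closure V) / (1 - lamUp)
  have hm₀ : 0 ≤ m₀ := pow_nonneg (div_nonneg (by positivity) (mul_pos hS.lamLow_pos hr).le) N
  have hK : 0 ≤ K := div_nonneg Metric.diam_nonneg (by linarith [hS.lamUp_lt_one])
  have h₀ : (0 : ℝ) ∈ Icc 0 1 := left_mem_Icc.2 zero_le_one
  have h₁ : (1 : ℝ) ∈ Icc 0 1 := right_mem_Icc.2 zero_le_one
  have hγx : ∀ t ∈ Icc (0 : ℝ) 1, dist (γ t) x ≤ L := fun t ht => by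
    rw [← hγ₀, dist_edist]
    exact ENNReal.toReal_mono htop (eVariationOn.edist_le γ ht h₀)
  rcases le_or_gt 1 L with hL₁ | hL₁
  · have hx₀ : x₀ ∈ closure V := subset_closure (hrV (Metric.mem_closedBall_self hr.le))
    calc |f x - f y| ≤ 2 * K := hf.abs_sub_le_of_mem_limitSetFrom hS hVb.closure hx₀
          (fun n i hi => hS.image_closure_subset hmaps hi ⟨x₀, hx₀, rfl⟩)
          (hγ₀ ▸ hγF h₀) (hγ₁ ▸ hγF h₁)
      _ ≤ (1 + (2 * m₀ + 2) * K) * 1 := by nlinarith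
      _ ≤ _ := by gcongr
  rcases ENNReal.toReal_nonneg.eq_or_lt with hL₀ | hL₀
  · obtain rfl : y = x := dist_le_zero.1 (hγ₁ ▸ hL₀ ▸ hγx 1 h₁)
    simpa using mul_nonneg (by positivity) ENNReal.toReal_nonneg
  calc |f x - f y| ≤ (2 * m₀ + 2) * K * L :=
        hf.abs_sub_le_of_isPreconnected hS hmaps hdisj hVb hr hrV hL₀ hL₁
          (isPreconnected_Icc.image γ hγ) (Set.image_subset_iff.2 hγF)
          (Set.image_subset_iff.2 fun t ht => hγx t ht) ⟨0, h₀, hγ₀⟩ ⟨1, h₁, hγ₁⟩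
    _ ≤ _ := by nlinarith

end OpenSetCondition

end LimitFractal

open LimitFractal

theorem stmt17_general {N : ℕ}
    (w : ℕ → ℕ → EuclideanSpace ℝ (Fin N) → EuclideanSpace ℝ (Fin N))
    (p : ℕ → ℕ) (hp : ∀ n, 1 ≤ p n)
    (lam : ℕ → ℕ → ℝ) (lamLow lamUp : ℝ)
    (hlow : 0 < lamLow) (hup : lamUp < 1)
    (hlam : ∀ n i, i < p n → lamLow ≤ lam n i ∧ lam n i ≤ lamUp)
    (hsim : ∀ n i, i < p n → ∀ a b, dist (w n i a) (w n i b) = lam n i * dist a b)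
    (V : Set (EuclideanSpace ℝ (Fin N)))
    (hVopen : IsOpen V) (hVbdd : Bornology.IsBounded V)
    (hmaps : ∀ n i, i < p n → w n i '' V ⊆ V)
    (hdisj : ∀ n i j, i < p n → j < p n → i ≠ j → Disjoint (w n i '' V) (w n j '' V))
    (x₀ : EuclideanSpace ℝ (Fin N)) (hx₀ : x₀ ∈ V) :
    ∃ c : ℝ, 1 ≤ c ∧
      ∀ x ∈ limitSet w p (closure V), ∀ y ∈ limitSet w p (closure V),
        dist x y ≤ connesDist w p x₀ x y ∧
        ∀ γ : ℝ → EuclideanSpace ℝ (Fin N),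
          ContinuousOn γ (Icc 0 1) → γ 0 = x → γ 1 = y →
          MapsTo γ (Icc 0 1) (limitSet w p (closure V)) →
          ENNReal.ofReal (connesDist w p x₀ x y) ≤
            ENNReal.ofReal c * eVariationOn γ (Icc 0 1) := by
  have hS : IsSimilitudeSystem w p lam lamLow lamUp := ⟨hp, hlow, hup, hlam, hsim⟩
  obtain ⟨r, hr, hrV⟩ := Metric.nhds_basis_closedBall.mem_iff.1 (hVopen.mem_nhds hx₀)
  have hK : 0 ≤ Metric.diam (closure V) / (1 - lamUp) :=
    div_nonneg Metric.diam_nonneg (by linarith)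
  have hm₀ : 0 ≤ ((1 + Metric.diam (closure V) + r) / (lamLow * r)) ^ N := by positivity
  have hx₀' : x₀ ∈ closure V := subset_closure hx₀
  refine ⟨1 + (2 * ((1 + Metric.diam (closure V) + r) / (lamLow * r)) ^ N + 2) *
    (Metric.diam (closure V) / (1 - lamUp)), le_add_of_nonneg_right (by positivity),
    fun x hx y hy => ?_⟩
  rw [limitSet_eq_limitSetFrom] at hx hy ⊢
  refine ⟨dist_le_connesDist fun f hf => hf.abs_sub_le_of_mem_limitSetFrom hS hVbdd.closure hx₀'
    (fun n i hi => hS.image_closure_subset hmaps hi ⟨x₀, hx₀', rfl⟩) hx hy,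
    fun γ hγ hγ₀ hγ₁ hγF => ?_⟩
  rcases eq_or_ne (eVariationOn γ (Icc 0 1)) ⊤ with htop | htop
  · rw [htop, ENNReal.mul_top (ENNReal.ofReal_pos.2 (by positivity)).ne']
    exact le_top
  rw [← ENNReal.ofReal_toReal htop, ← ENNReal.ofReal_mul (by positivity)]
  exact ENNReal.ofReal_le_ofReal (connesDist_le (fun f hf =>
    hf.abs_sub_le_mul_eVariationOn hS hmaps hdisj hVbdd hr hrV hγ hγ₀ hγ₁ hγF htop)
    (by positivity))

/-- On a limit fractal with ratios bounded away from `0` and `1` and with OSC,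
there is `c ≥ 1` such that `‖x−y‖ ≤ d(x,y) ≤ c ⋅ d_geo(x,y)`: the Connes metric is
dominated by `c` times the length of any rectifiable curve in `F` joining `x, y`. -/
theorem stmt17 {N : ℕ} (hN : 0 < N)
    (w : ℕ → ℕ → EuclideanSpace ℝ (Fin N) → EuclideanSpace ℝ (Fin N))
    (p : ℕ → ℕ) (hp : ∀ n, 1 ≤ p n)
    (lam : ℕ → ℕ → ℝ) (lamLow lamUp : ℝ)
    (hlow : 0 < lamLow) (hup : lamUp < 1)
    (hlam : ∀ n i, i < p n → lamLow ≤ lam n i ∧ lam n i ≤ lamUp)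
    (hsim : ∀ n i, i < p n → ∀ a b, dist (w n i a) (w n i b) = lam n i * dist a b)
    (V : Set (EuclideanSpace ℝ (Fin N)))
    (hVopen : IsOpen V) (hVbdd : Bornology.IsBounded V) (hVne : V.Nonempty)
    (hmaps : ∀ n i, i < p n → w n i '' V ⊆ V)
    (hdisj : ∀ n i j, i < p n → j < p n → i ≠ j → Disjoint (w n i '' V) (w n j '' V))
    (x₀ : EuclideanSpace ℝ (Fin N)) (hx₀ : x₀ ∈ V) :
    ∃ c : ℝ, 1 ≤ c ∧
      ∀ x ∈ limitSet w p (closure V), ∀ y ∈ limitSet w p (closure V),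
        dist x y ≤ connesDist w p x₀ x y ∧
        ∀ γ : ℝ → EuclideanSpace ℝ (Fin N),
          ContinuousOn γ (Icc 0 1) → γ 0 = x → γ 1 = y →
          MapsTo γ (Icc 0 1) (limitSet w p (closure V)) →
          ENNReal.ofReal (connesDist w p x₀ x y) ≤
            ENNReal.ofReal c * eVariationOn γ (Icc 0 1) :=
  stmt17_general w p hp lam lamLow lamUp hlow hup hlam hsim V hVopen hVbdd hmaps hdisj x₀ hx₀
end
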